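/- arXiv:1509.08123 — 7 statements merged into one kernel-verified Lean document; each statement's English description precedes it below -/
import Mathlib

section
/- Let G=(V,E) be a finite simple undirected graph, let C ⊆ V span a clique in G, and let 0<ε<1. Let U' = (u₁,…,u_k) be a sequence of k ≥ 50/ε² vertices chosen uniformly and independently at random from C. Then, with probability at least 1 − e^{−25/ε} over the choice of U', the number of vertices v ∈ V that are adjacent to all of u₁,…,u_k but are adjacent to fewer than (1−ε)|C| vertices of C is at most e^{−25/ε}·|V|. -/
/-!
Markov's inequality for the number of bad vertices adjacent to the whole sample. A vertex `v`
with fewer than `(1 - ε)|C|` neighbours in `C` is adjacent to all of `u₁, …, u_k` for at most a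
`(1 - ε)^k ≤ e^{-εk} ≤ e^{-50/ε}` fraction of the samples, so the expected number of such
vertices is at most `e^{-50/ε}|V| = e^{-25/ε} · (e^{-25/ε}|V|)`, and the threshold
`e^{-25/ε}|V|` is exceeded with probability at most `e^{-25/ε}`.
-/

open Finset

namespace Finset

variable {α β : Type*}

theorem one_sub_le_card_filter_le_div_card {s : Finset α} (hs : s.Nonempty) {f : α → ℝ}
    (hf : ∀ x ∈ s, 0 ≤ f x) {t δ : ℝ} (ht : 0 < t) (hsum : ∑ x ∈ s, f x ≤ δ * t * #s) :
    1 - δ ≤ (#(s.filter fun x => f x ≤ t) : ℝ) / #s := by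
  set bad := s.filter fun x => ¬f x ≤ t
  have hbad : t * #bad ≤ t * (δ * #s) :=
    calc t * #bad = ∑ _x ∈ bad, t := by rw [sum_const, nsmul_eq_mul, mul_comm]
      _ ≤ ∑ x ∈ bad, f x := sum_le_sum fun x hx => (not_le.1 (mem_filter.1 hx).2).le
      _ ≤ ∑ x ∈ s, f x := sum_le_sum_of_subset_of_nonneg (filter_subset _ _) fun x hx _ => hf x hx
      _ ≤ t * (δ * #s) := by linarith
  have hsplit : (#(s.filter fun x => f x ≤ t) : ℝ) + #bad = #s := by
    exact_mod_cast card_filter_add_card_filter_not _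
  rw [le_div_iff₀ (by exact_mod_cast hs.card_pos)]
  linarith [le_of_mul_le_mul_left hbad ht]

theorem sum_card_filter_forall_eq_sum_card_filter_pow
    (R : β → α → Prop) [DecidableRel R] (C : Finset α) (T : Finset β) (k : ℕ) :
    ∑ u ∈ Fintype.piFinset (fun _ : Fin k => C), #(T.filter fun v => ∀ i, R v (u i)) =
      ∑ v ∈ T, #(C.filter fun c => R v c) ^ k := by
  calc _ = ∑ v ∈ T, #((Fintype.piFinset fun _ : Fin k => C).filter fun u => ∀ i, R v (u i)) := by
        simpa only [bipartiteAbove, bipartiteBelow] using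
          sum_card_bipartiteAbove_eq_sum_card_bipartiteBelow
            (r := fun (u : Fin k → α) v => ∀ i, R v (u i))
    _ = ∑ v ∈ T, #(Fintype.piFinset fun _ : Fin k => C.filter fun c => R v c) :=
        sum_congr rfl fun v _ => by
          congr 1
          ext u
          simp [Fintype.mem_piFinset, forall_and]
    _ = ∑ v ∈ T, #(C.filter fun c => R v c) ^ k := by
        simp only [Fintype.card_piFinset_const]

end Finset

theorem Real.one_sub_pow_le_exp_neg_mul {ε : ℝ} (hε : ε ≤ 1) (k : ℕ) :
    (1 - ε) ^ k ≤ Real.exp (-(k * ε)) :=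
  calc (1 - ε) ^ k ≤ Real.exp (-ε) ^ k :=
        pow_le_pow_left₀ (sub_nonneg.2 hε) (Real.one_sub_le_exp_neg ε) k
    _ = Real.exp (-(k * ε)) := by rw [← Real.exp_nat_mul]; ring_nf

theorem sum_card_filter_forall_and_card_lt_le {α β : Type*} [Fintype β]
    (R : β → α → Prop) [DecidableRel R] (C : Finset α) {ε : ℝ} (hε : ε ≤ 1) (k : ℕ) :
    ∑ u ∈ Fintype.piFinset (fun _ : Fin k => C),
        (#(univ.filter fun v => (∀ i, R v (u i)) ∧
          (#(C.filter fun c => R v c) : ℝ) < (1 - ε) * #C) : ℝ) ≤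
      Fintype.card β * ((1 - ε) ^ k * #C ^ k) := by
  set sparse := univ.filter fun v : β => (#(C.filter fun c => R v c) : ℝ) < (1 - ε) * #C
  have hfilter (u : Fin k → α) : univ.filter (fun v => (∀ i, R v (u i)) ∧
      (#(C.filter fun c => R v c) : ℝ) < (1 - ε) * #C) = sparse.filter fun v => ∀ i, R v (u i) := by
    rw [filter_filter]
    simp_rw [and_comm]
  simp_rw [hfilter]
  rw [← Nat.cast_sum, sum_card_filter_forall_eq_sum_card_filter_pow]
  push_cast
  calc ∑ v ∈ sparse, (#(C.filter fun c => R v c) : ℝ) ^ k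
      ≤ ∑ _v ∈ sparse, ((1 - ε) * #C) ^ k :=
        sum_le_sum fun v hv => pow_le_pow_left₀ (by positivity) (mem_filter.1 hv).2.le _
    _ ≤ Fintype.card β * ((1 - ε) ^ k * #C ^ k) := by
        rw [sum_const, nsmul_eq_mul, mul_pow]
        have : 0 ≤ 1 - ε := sub_nonneg.2 hε
        gcongr
        exact_mod_cast card_le_univ sparse

open scoped Classical in
theorem clique_sample_good_general {V : Type*} [Fintype V] [DecidableEq V]
    (G : SimpleGraph V) [DecidableRel G.Adj]
    (C : Finset V) (hC : C.Nonempty)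
    (ε : ℝ) (hε0 : 0 < ε) (hε1 : ε < 1)
    (k : ℕ) (hk : 50 / ε ^ 2 ≤ (k : ℝ)) :
    1 - Real.exp (-25 / ε) ≤
      (((Finset.univ : Finset (Fin k → V)).filter fun u =>
          (∀ i, u i ∈ C) ∧
          (((Finset.univ : Finset V).filter fun v =>
              (∀ i, G.Adj v (u i)) ∧
              ((C.filter fun c => G.Adj v c).card : ℝ) < (1 - ε) * (C.card : ℝ)).card : ℝ) ≤
            Real.exp (-25 / ε) * (Fintype.card V : ℝ)).card : ℝ) /
      (((Finset.univ : Finset (Fin k → V)).filter fun u => ∀ i, u i ∈ C).card : ℝ) := by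
  set p := Real.exp (-25 / ε)
  have hexp : (1 - ε) ^ k ≤ p * p := by
    have hkε : -(k * ε) ≤ -25 / ε + -25 / ε := by
      rw [div_le_iff₀ (by positivity)] at hk
      field_simp
      nlinarith
    calc (1 - ε) ^ k ≤ Real.exp (-(k * ε)) := Real.one_sub_pow_le_exp_neg_mul hε1.le k
      _ ≤ Real.exp (-25 / ε + -25 / ε) := Real.exp_le_exp.2 hkε
      _ = p * p := Real.exp_add _ _
  have hsamples : (univ.filter fun u : Fin k → V => ∀ i, u i ∈ C) =
      Fintype.piFinset fun _ => C := by
    ext u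
    simp [Fintype.mem_piFinset]
  rw [← filter_filter, hsamples]
  have hV : 0 < (Fintype.card V : ℝ) := by exact_mod_cast Fintype.card_pos_iff.2 ⟨hC.choose⟩
  refine one_sub_le_card_filter_le_div_card hC.piFinset_const (fun _ _ => by positivity)
    (mul_pos (Real.exp_pos _) hV) ?_
  calc _ ≤ Fintype.card V * ((1 - ε) ^ k * #C ^ k) :=
        sum_card_filter_forall_and_card_lt_le G.Adj C hε1.le k
    _ ≤ Fintype.card V * (p * p * #C ^ k) := by gcongr
    _ = p * (p * Fintype.card V) * #(Fintype.piFinset fun _ : Fin k => C) := by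
        rw [Fintype.card_piFinset_const]; push_cast; ring

open scoped Classical in
/-- if `C` spans a clique in `G` and `U' = (u₁, …, u_k)` is a sequence of
`k ≥ 50/ε²` uniformly and independently chosen vertices of `C`, then with probability at
least `1 - e^{-25/ε}` the number of vertices `v ∈ V` adjacent to all the `u i` but adjacent
to fewer than `(1-ε)|C|` vertices of `C` is at most `e^{-25/ε}·|V|`. -/
theorem clique_sample_good {V : Type*} [Fintype V] [DecidableEq V]
    (G : SimpleGraph V) [DecidableRel G.Adj]
    (C : Finset V) (hC : C.Nonempty)
    (hclique : ∀ u ∈ C, ∀ v ∈ C, u ≠ v → G.Adj u v)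
    (ε : ℝ) (hε0 : 0 < ε) (hε1 : ε < 1)
    (k : ℕ) (hk : 50 / ε ^ 2 ≤ (k : ℝ)) :
    1 - Real.exp (-25 / ε) ≤
      (((Finset.univ : Finset (Fin k → V)).filter fun u =>
          (∀ i, u i ∈ C) ∧
          (((Finset.univ : Finset V).filter fun v =>
              (∀ i, G.Adj v (u i)) ∧
              ((C.filter fun c => G.Adj v c).card : ℝ) < (1 - ε) * (C.card : ℝ)).card : ℝ) ≤
            Real.exp (-25 / ε) * (Fintype.card V : ℝ)).card : ℝ) /
      (((Finset.univ : Finset (Fin k → V)).filter fun u => ∀ i, u i ∈ C).card : ℝ) :=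
  clique_sample_good_general G C hC ε hε0 hε1 k hk
end

section
/- Let G=(V,E) be a finite simple undirected graph, let 0<ρ<1 and 0<ε<1, and let Γ ⊆ V be nonempty. For v ∈ V let f_v = |N(v)∩Γ|/|Γ| be the fraction of vertices of Γ adjacent to v. Suppose C ⊆ Γ satisfies |C| ≥ ρ|V| and (1/|C|)·Σ_{v∈C} f_v ≥ 1−2ε, and let S ⊆ Γ be any set of exactly ρ|V| vertices of Γ having the largest values of f_v (i.e., f_v ≥ f_w for all v ∈ S and w ∈ Γ∖S). Then (1/|S|)·Σ_{v∈S} f_v ≥ 1−2ε, and the edge density of S satisfies |E(S)|/C(|S|,2) ≥ 1 − 2ε/ρ, where E(S) ⊆ E is the set of edges with both endpoints in S and C(|S|,2) = |S|(|S|−1)/2. -/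
/-!
Let `m` be the least value of `f` on `S`. Since `f ≥ m` on `S \ C` and `f ≤ m` on `C \ S ⊆ Γ \ S`,
`∑_C f ≤ ∑_S f + (|C| - |S|) m`, and `|S| m ≤ ∑_S f`; as `|S| ≤ |C|`, the average of `f` over `S`
is at least its average over `C`.

A vertex of `S` has at most `|Γ| - |S|` neighbours in `Γ \ S`, so summing `|N(v) ∩ Γ| = |Γ| f v`
over `S` gives `(1 - 2ε) |S| |Γ| ≤ 2 |E(S)| + |S| (|Γ| - |S|)`, i.e.
`2 |E(S)| ≥ |S|² - 2ε |S| |Γ| ≥ (1 - 2ε/ρ) |S|²`, using `|Γ| ≤ |V| = |S| / ρ`.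
-/

open Finset

variable {V : Type*} [Fintype V] [DecidableEq V]

/-- `N(v) ∩ W`: the neighbors of `v` lying in `W`. -/
def nbrsIn (G : SimpleGraph V) [DecidableRel G.Adj] (v : V) (W : Finset V) : Finset V :=
  W.filter fun w => G.Adj v w

/-- The set of edges of `G` with both endpoints in `S`. -/
def edgesIn (G : SimpleGraph V) [DecidableRel G.Adj] (S : Finset V) : Finset (Sym2 V) :=
  G.edgeFinset ∩ S.sym2

lemma sum_card_nbrsIn_self_eq_two_mul_card_edgesIn (G : SimpleGraph V) [DecidableRel G.Adj] (S : Finset V) :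
    ∑ v ∈ S, #(nbrsIn G v S) = 2 * #(edgesIn G S) := by
  have hdeg (v : (S : Set V)) : (G.induce (S : Set V)).degree v = #(nbrsIn G v S) := by
    rw [← SimpleGraph.card_neighborFinset_eq_degree, ← card_map (Function.Embedding.subtype _)]
    congr 1
    ext w
    simp [nbrsIn, and_comm]
  have hedges : #(G.induce (S : Set V)).edgeFinset = #(edgesIn G S) := by
    have := congrArg card (SimpleGraph.map_edgeFinset_induce (G := G) (s := (S : Set V)))
    rw [card_map, Finset.toFinset_coe] at this
    convert this using 3
    rfl
  rw [← hedges, ← SimpleGraph.sum_degrees_eq_twice_card_edges, ← sum_coe_sort]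
  exact sum_congr rfl fun v _ => (hdeg v).symm

lemma two_mul_card_edgesIn_le (G : SimpleGraph V) [DecidableRel G.Adj] (S : Finset V) :
    2 * #(edgesIn G S) ≤ #S * (#S - 1) := by
  rw [← sum_card_nbrsIn_self_eq_two_mul_card_edgesIn, ← smul_eq_mul, ← sum_const]
  refine sum_le_sum fun v hv => ?_
  rw [← card_erase_of_mem hv]
  refine card_le_card fun w hw => ?_
  rw [nbrsIn, mem_filter] at hw
  exact mem_erase.2 ⟨hw.2.ne', hw.1⟩

lemma le_card_edgesIn_div_of_mul_sq_le (G : SimpleGraph V) [DecidableRel G.Adj] {S : Finset V}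
    (hS : S.Nonempty) {c : ℝ} (hc : c * #S ^ 2 ≤ 2 * #(edgesIn G S)) :
    c ≤ #(edgesIn G S) / (#S * (#S - 1) / 2) := by
  have hS1 : (1 : ℝ) ≤ #S := by exact_mod_cast hS.card_pos
  have hmax : 2 * (#(edgesIn G S) : ℝ) ≤ #S * (#S - 1) := by
    simpa [Nat.cast_sub hS.card_pos] using
      (Nat.cast_le (α := ℝ)).2 (two_mul_card_edgesIn_le G S)
  rcases le_or_gt c 0 with hc0 | hc0
  · exact hc0.trans (div_nonneg (by positivity) (by nlinarith))
  -- a positive `c` forces `#S ≥ 2`, so the denominator is not the junk value `0`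
  have hS2 : (1 : ℝ) < #S := by nlinarith
  rw [le_div_iff₀ (by nlinarith)]
  nlinarith

lemma sum_le_sum_add_card_sub_mul {ι : Type*} [DecidableEq ι] (f : ι → ℝ) {S C : Finset ι}
    {m : ℝ} (hout : ∀ w ∈ C \ S, f w ≤ m) (hin : ∀ v ∈ S \ C, m ≤ f v) :
    ∑ v ∈ C, f v ≤ ∑ v ∈ S, f v + (#C - #S) * m := by
  have hsum := sum_sdiff_sub_sum_sdiff (s₁ := S) (s₂ := C) (f := f)
  have hcard : (#(C \ S) : ℝ) - #(S \ C) = #C - #S := by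
    have hC : (#(C \ S) : ℝ) + #(C ∩ S) = #C := by exact_mod_cast card_sdiff_add_card_inter C S
    have hS : (#(S \ C) : ℝ) + #(C ∩ S) = #S := by
      rw [inter_comm]; exact_mod_cast card_sdiff_add_card_inter S C
    linarith
  have hCS := sum_le_card_nsmul (C \ S) f m hout
  have hSC := card_nsmul_le_sum (S \ C) f m hin
  rw [nsmul_eq_mul] at hCS hSC
  rw [← hcard, sub_mul]
  linarith

lemma sum_div_card_le_sum_div_card_of_forall_le {ι : Type*} [DecidableEq ι] {f : ι → ℝ}
    {S C : Finset ι} (hS : S.Nonempty) (hSC : #S ≤ #C)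
    (htop : ∀ v ∈ S, ∀ w ∈ C \ S, f w ≤ f v) :
    (∑ v ∈ C, f v) / #C ≤ (∑ v ∈ S, f v) / #S := by
  obtain ⟨v₀, hv₀, hmin⟩ := S.exists_min_image f hS
  have hexchange := sum_le_sum_add_card_sub_mul f (htop v₀ hv₀)
    fun v hv => hmin v (mem_sdiff.1 hv).1
  have hlow : #S * f v₀ ≤ ∑ v ∈ S, f v := by
    simpa only [nsmul_eq_mul] using card_nsmul_le_sum S f (f v₀) hmin
  have hSpos : (0 : ℝ) < #S := by exact_mod_cast hS.card_pos
  have hSC' : (#S : ℝ) ≤ #C := by exact_mod_cast hSC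
  rw [div_le_div_iff₀ (hSpos.trans_le hSC') hSpos]
  nlinarith

lemma sum_card_nbrsIn_le (G : SimpleGraph V) [DecidableRel G.Adj] (S Γ : Finset V) :
    ∑ v ∈ S, #(nbrsIn G v Γ) ≤ 2 * #(edgesIn G S) + #S * #(Γ \ S) := by
  calc ∑ v ∈ S, #(nbrsIn G v Γ)
      ≤ ∑ v ∈ S, (#(nbrsIn G v S) + #(Γ \ S)) :=
        sum_le_sum fun v _ => (card_le_card fun w hw => by
          simp only [nbrsIn, mem_union, mem_filter, mem_sdiff] at hw ⊢
          tauto).trans (card_union_le _ _)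
    _ = 2 * #(edgesIn G S) + #S * #(Γ \ S) := by
        rw [sum_add_distrib, sum_card_nbrsIn_self_eq_two_mul_card_edgesIn, sum_const, smul_eq_mul]

theorem clique_top_set_dense_general (G : SimpleGraph V) [DecidableRel G.Adj]
    (ρ ε : ℝ) (hρ0 : 0 < ρ) (hε0 : 0 < ε)
    (Γ : Finset V) (hΓne : Γ.Nonempty)
    (f : V → ℝ) (hf : ∀ v : V, f v = ((nbrsIn G v Γ).card : ℝ) / (Γ.card : ℝ))
    (C : Finset V) (hCΓ : C ⊆ Γ) (hCcard : ρ * (Fintype.card V : ℝ) ≤ (C.card : ℝ))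
    (hCavg : 1 - 2 * ε ≤ (1 / (C.card : ℝ)) * ∑ v ∈ C, f v)
    (S : Finset V) (hSΓ : S ⊆ Γ) (hScard : (S.card : ℝ) = ρ * (Fintype.card V : ℝ))
    (hStop : ∀ v ∈ S, ∀ w ∈ Γ \ S, f w ≤ f v) :
    1 - 2 * ε ≤ (1 / (S.card : ℝ)) * ∑ v ∈ S, f v ∧
    1 - 2 * ε / ρ ≤
      ((edgesIn G S).card : ℝ) / ((S.card : ℝ) * ((S.card : ℝ) - 1) / 2) := by
  have hΓpos : (0 : ℝ) < #Γ := by exact_mod_cast hΓne.card_pos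
  have hΓV : (#Γ : ℝ) ≤ Fintype.card V := by exact_mod_cast card_le_univ Γ
  have hSpos : (0 : ℝ) < #S := by rw [hScard]; nlinarith
  have hSne : S.Nonempty := card_pos.1 (by exact_mod_cast hSpos)
  have hSavg : 1 - 2 * ε ≤ (∑ v ∈ S, f v) / #S := by
    rw [one_div_mul_eq_div] at hCavg
    refine hCavg.trans (sum_div_card_le_sum_div_card_of_forall_le hSne
      (by exact_mod_cast hScard ▸ hCcard) fun v hv w hw => ?_)
    exact hStop v hv w (sdiff_subset_sdiff hCΓ le_rfl hw)
  refine ⟨by rwa [one_div_mul_eq_div], le_card_edgesIn_div_of_mul_sq_le G hSne ?_⟩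
  have hnbrs : #Γ * ∑ v ∈ S, f v = ∑ v ∈ S, (#(nbrsIn G v Γ) : ℝ) := by
    rw [mul_sum]
    exact sum_congr rfl fun v _ => by rw [hf, mul_div_cancel₀ _ hΓpos.ne']
  have hcount : ∑ v ∈ S, (#(nbrsIn G v Γ) : ℝ) ≤ 2 * #(edgesIn G S) + #S * (#Γ - #S) := by
    rw [← Nat.cast_sub (card_le_card hSΓ), ← card_sdiff_of_subset hSΓ]
    exact_mod_cast sum_card_nbrsIn_le G S Γ
  rw [le_div_iff₀ hSpos] at hSavg
  calc (1 - 2 * ε / ρ) * #S ^ 2 = #S ^ 2 - 2 * ε * #S * Fintype.card V := by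
        rw [hScard]; field_simp
    _ ≤ #S ^ 2 - 2 * ε * #S * #Γ := by gcongr
    _ ≤ #S ^ 2 + #Γ * ∑ v ∈ S, f v - #S * #Γ := by
        linarith [mul_le_mul_of_nonneg_left hSavg hΓpos.le]
    _ ≤ 2 * #(edgesIn G S) := by linarith

/-- if `S` consists of `ρ|V|` vertices of `Γ` with the largest fractions
`f_v = |N(v)∩Γ|/|Γ|` of neighbors in `Γ`, and some `C ⊆ Γ` with `|C| ≥ ρ|V|` has average
`f`-value at least `1-2ε`, then so does `S`, and the edge density of `S` is at least
`1 - 2ε/ρ`. -/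
theorem clique_top_set_dense (G : SimpleGraph V) [DecidableRel G.Adj]
    (ρ ε : ℝ) (hρ0 : 0 < ρ) (hρ1 : ρ < 1) (hε0 : 0 < ε) (hε1 : ε < 1)
    (Γ : Finset V) (hΓne : Γ.Nonempty)
    (f : V → ℝ) (hf : ∀ v : V, f v = ((nbrsIn G v Γ).card : ℝ) / (Γ.card : ℝ))
    (C : Finset V) (hCΓ : C ⊆ Γ) (hCcard : ρ * (Fintype.card V : ℝ) ≤ (C.card : ℝ))
    (hCavg : 1 - 2 * ε ≤ (1 / (C.card : ℝ)) * ∑ v ∈ C, f v)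
    (S : Finset V) (hSΓ : S ⊆ Γ) (hScard : (S.card : ℝ) = ρ * (Fintype.card V : ℝ))
    (hStop : ∀ v ∈ S, ∀ w ∈ Γ \ S, f w ≤ f v) :
    1 - 2 * ε ≤ (1 / (S.card : ℝ)) * ∑ v ∈ S, f v ∧
    1 - 2 * ε / ρ ≤
      ((edgesIn G S).card : ℝ) / ((S.card : ℝ) * ((S.card : ℝ) - 1) / 2) :=
  clique_top_set_dense_general G ρ ε hρ0 hε0 Γ hΓne f hf C hCΓ hCcard hCavg S hSΓ hScard hStop
end

section
/- There is a universal constant c>0 such that the following holds. Let 𝒢 be a free game with vertex sets X, Y, alphabet Σ, and constraints {π_e}; let S ⊆ X, γ > 0, and let k be a positive integer. For each h : S→Σ fix an induced labeling f_{S,h,Y} : Y→Σ, and for x ∈ X set g_{S,h,x} := max_{σ∈Σ} of the fraction of y ∈ Y with (σ, f_{S,h,Y}(y)) ∈ π_{(x,y)}; set bias_{S,h} := (1/|X|)·Σ_{x∈X} g_{S,h,x} and, for X' ⊆ X, bias_{S,h}^{X'} := (1/|X'|)·Σ_{x∈X'} g_{S,h,x}. If X' ⊆ X is a uniformly random subset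 of size ⌈(k + |S|·log|Σ|)/γ²⌉ (natural logarithm; assume this is at most |X|), then with probability at least 1 − e^{−ck}, for every h : S→Σ one has |bias_{S,h}^{X'} − bias_{S,h}| ≤ γ. -/
/-!
Fix `h : S → Σ` and write `g = g_{S,h,·} : X → [0, 1]`. Tilting by `w x = exp (t (g x - 𝔼 g))`,
the number of `m`-subsets `X'` whose average of `g` exceeds `𝔼 g + γ` is at most
`e^{-tmγ} ∑_{|X'| = m} ∏_{x ∈ X'} w x`. Maclaurin's inequality bounds this elementary symmetric sum
by `C(|X|, m) (𝔼 w)^m`, and Hoeffding's lemma bounds `𝔼 w ≤ e^{t²/8}`; with `t = 4γ` a fixed `h`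
fails with probability at most `2 e^{-2mγ²}`. Since `mγ² ≥ k + |S| log |Σ|`, a union bound over
the `|Σ|^|S|` labelings leaves a failure probability of at most `2 e^{-2k} ≤ e^{-k}`.
-/

open Finset

section FreeGames

variable {X Y A : Type*} [Fintype X] [Fintype Y] [Fintype A] [DecidableEq A]

/-- `gY` is an induced labeling `f_{S,h,Y}`: for each `y`, the label `gY y` maximizes the
number of `s ∈ S` with `(h s, σ) ∈ π_{(s,y)}`. -/
def IsInducedY (π : X → Y → Finset (A × A)) (S : Finset X) (h : {x // x ∈ S} → A)
    (gY : Y → A) : Prop :=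
  ∀ (y : Y) (σ : A),
    (S.attach.filter fun s : {x // x ∈ S} => (h s, σ) ∈ π s.1 y).card ≤
      (S.attach.filter fun s : {x // x ∈ S} => (h s, gY y) ∈ π s.1 y).card

/-- `g_{S,h,x}`: the maximum over `σ ∈ Σ` of the fraction of `y ∈ Y` with
`(σ, gY y) ∈ π_{(x,y)}`, where `gY` is the fixed induced labeling `f_{S,h,Y}`. -/
noncomputable def gMax [Nonempty A] (π : X → Y → Finset (A × A)) (gY : Y → A) (x : X) : ℝ :=
  (Finset.univ : Finset A).sup' Finset.univ_nonempty fun σ =>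
    (((Finset.univ : Finset Y).filter fun y => (σ, gY y) ∈ π x y).card : ℝ) /
      (Fintype.card Y : ℝ)

end FreeGames

theorem gMax_mem_Icc {X Y A : Type*} [Fintype Y] [Fintype A] [DecidableEq A] [Nonempty A]
    (π : X → Y → Finset (A × A)) (gY : Y → A) (x : X) :
    gMax π gY x ∈ Set.Icc 0 1 := by
  refine ⟨?_, sup'_le _ _ fun σ _ => div_le_one_of_le₀ ?_ (Nat.cast_nonneg _)⟩
  · obtain ⟨σ⟩ := ‹Nonempty A›
    exact le_sup'_of_le _ (mem_univ σ) (by positivity)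
  · exact_mod_cast (card_filter_le _ _).trans_eq card_univ

open scoped BigOperators

section Maclaurin

theorem pow_mul_sub_le_pow_succ {R : Type*} [CommRing R] [LinearOrder R] [IsStrictOrderedRing R]
    {a b : R} (ha : 0 ≤ a) (hb : 0 ≤ b) (m : ℕ) :
    a ^ m * ((m + 1) * b - m * a) ≤ b ^ (m + 1) := by
  induction m with
  | zero => simp
  | succ m ih =>
    push_cast
    calc a ^ (m + 1) * ((m + 1 + 1) * b - (m + 1) * a)
        = b * (a ^ m * ((m + 1) * b - m * a)) - a ^ m * ((m + 1) * (b - a) ^ 2) := by ring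
      _ ≤ b * b ^ (m + 1) - 0 := by gcongr; positivity
      _ = b ^ (m + 1 + 1) := by ring

theorem Nat.cast_choose_succ_right_eq {R : Type*} [CommRing R] (N m : ℕ) :
    (N.choose (m + 1) : R) * (m + 1) = N.choose m * ((N : R) - m) := by
  rcases le_or_gt m N with h | h
  · rw [← Nat.cast_sub h]
    exact_mod_cast congrArg (Nat.cast : ℕ → R) (Nat.choose_succ_right_eq N m)
  · simp [Nat.choose_eq_zero_of_lt h, Nat.choose_eq_zero_of_lt (h.trans (Nat.lt_succ_self m))]

/-- The inductive step of Maclaurin's inequality: `(N a + c) / (N + 1)` is the mean after adding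
a weight `c` to `N` weights of mean `a`. -/
theorem choose_mul_pow_add_le {a c : ℝ} (ha : 0 ≤ a) (hc : 0 ≤ c) (N m : ℕ) :
    (N.choose (m + 1) : ℝ) * a ^ (m + 1) + c * (N.choose m * a ^ m) ≤
      ((N + 1).choose (m + 1) : ℝ) * ((N * a + c) / (N + 1)) ^ (m + 1) := by
  set μ := (N * a + c) / (N + 1) with hμ
  have hc : c = (N + 1) * μ - N * a := by rw [hμ]; field_simp; ring
  have hchoose : ((N + 1).choose (m + 1) : ℝ) * (m + 1) = (N + 1) * N.choose m := by
    exact_mod_cast (Nat.add_one_mul_choose_eq N m).symm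
  rw [← mul_le_mul_iff_left₀ (by positivity : (0 : ℝ) < m + 1)]
  calc _ = ((N + 1) * N.choose m) * (a ^ m * ((m + 1) * μ - m * a)) := by
        rw [hc]; linear_combination a ^ (m + 1) * Nat.cast_choose_succ_right_eq (R := ℝ) N m
    _ ≤ ((N + 1) * N.choose m) * μ ^ (m + 1) := by
        gcongr; exact pow_mul_sub_le_pow_succ ha (by positivity) m
    _ = _ := by rw [← hchoose]; ring

theorem sum_powersetCard_succ_insert_prod {ι R : Type*} [DecidableEq ι] [CommSemiring R]
    {t : ι} {s : Finset ι} (ht : t ∉ s) (w : ι → R) (m : ℕ) :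
    ∑ P ∈ (insert t s).powersetCard (m + 1), ∏ i ∈ P, w i =
      ∑ P ∈ s.powersetCard (m + 1), ∏ i ∈ P, w i + w t * ∑ P ∈ s.powersetCard m, ∏ i ∈ P, w i := by
  have hts : ∀ P ∈ s.powersetCard m, t ∉ P := fun P hP htP => ht ((mem_powersetCard.1 hP).1 htP)
  rw [powersetCard_succ_insert ht, sum_union, sum_image, mul_sum]
  · exact congrArg _ (sum_congr rfl fun P hP => prod_insert (hts P hP))
  · intro P hP Q hQ hPQ
    rw [← erase_insert (hts P hP), ← erase_insert (hts Q hQ)]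
    exact congrArg (erase · t) hPQ
  · refine disjoint_left.2 fun P hP hP' => ?_
    obtain ⟨Q, -, rfl⟩ := mem_image.1 hP'
    exact ht ((mem_powersetCard.1 hP).1 (mem_insert_self t Q))

theorem sum_powersetCard_prod_le_choose_mul_expect_pow {ι : Type*} [DecidableEq ι] {s : Finset ι}
    {w : ι → ℝ} (hw : ∀ i ∈ s, 0 ≤ w i) (m : ℕ) :
    ∑ P ∈ s.powersetCard m, ∏ i ∈ P, w i ≤ (#s).choose m * (𝔼 i ∈ s, w i) ^ m := by
  induction s using Finset.induction_on generalizing m with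
  | empty =>
    cases m with
    | zero => simp
    | succ m => rw [powersetCard_eq_empty.2 (by simp)]; simp
  | insert t s ht ih =>
    cases m with
    | zero => simp
    | succ m =>
      have hws : ∀ i ∈ s, 0 ≤ w i := fun i hi => hw i (mem_insert_of_mem hi)
      have hwt : 0 ≤ w t := hw t (mem_insert_self t s)
      have hexp : 𝔼 i ∈ insert t s, w i = (#s * 𝔼 i ∈ s, w i + w t) / (#s + 1) := by
        rw [expect_eq_sum_div_card, card_mul_expect, sum_insert ht, card_insert_of_notMem ht]
        push_cast; ring
      rw [sum_powersetCard_succ_insert_prod ht, card_insert_of_notMem ht, hexp]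
      calc _ ≤ (#s).choose (m + 1) * (𝔼 i ∈ s, w i) ^ (m + 1)
            + w t * ((#s).choose m * (𝔼 i ∈ s, w i) ^ m) :=
            add_le_add (ih hws _) (mul_le_mul_of_nonneg_left (ih hws m) hwt)
        _ ≤ _ := by exact_mod_cast choose_mul_pow_add_le (expect_nonneg hws) hwt (#s) m

end Maclaurin

section Sampling

open Real MeasureTheory ProbabilityTheory

variable {ι : Type*} [Fintype ι]

theorem integral_uniformOn_univ [MeasurableSpace ι] [MeasurableSingletonClass ι] (f : ι → ℝ) :
    ∫ i, f i ∂(uniformOn Set.univ) = 𝔼 i, f i := by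
  rw [integral_fintype .of_finite, Fintype.expect_eq_sum_div_card, sum_div]
  refine sum_congr rfl fun i _ => ?_
  simp [measureReal_def, uniformOn_univ]
  ring

theorem expect_exp_mul_sub_expect_le {g : ι → ℝ} {a b : ℝ} (hg : ∀ i, g i ∈ Set.Icc a b) (t : ℝ) :
    𝔼 i, exp (t * (g i - 𝔼 j, g j)) ≤ exp ((b - a) ^ 2 * t ^ 2 / 8) := by
  rcases isEmpty_or_nonempty ι with hι | hι
  · simpa using (exp_pos _).le
  let _ : MeasurableSpace ι := ⊤
  have := (hasSubgaussianMGF_of_mem_Icc (μ := uniformOn Set.univ) (X := g)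
    Measurable.of_discrete.aemeasurable (ae_of_all _ hg)).mgf_le t
  simp only [mgf, integral_uniformOn_univ] at this
  convert this using 2
  push_cast
  rw [norm_eq_abs, div_pow, sq_abs]
  ring

variable [DecidableEq ι]

theorem card_filter_expect_add_le_expect_le {g : ι → ℝ} {a b : ℝ} (hg : ∀ i, g i ∈ Set.Icc a b)
    (m : ℕ) (γ : ℝ) {t : ℝ} (ht : 0 ≤ t) :
    (#{P ∈ powersetCard m univ | 𝔼 i, g i + γ ≤ 𝔼 i ∈ P, g i} : ℝ) ≤
      (Fintype.card ι).choose m * exp (m * ((b - a) ^ 2 * t ^ 2 / 8 - t * γ)) := by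
  set w : ι → ℝ := fun i => exp (t * (g i - 𝔼 j, g j))
  have htilt : ∀ P ∈ powersetCard m univ, 𝔼 i, g i + γ ≤ 𝔼 i ∈ P, g i →
      exp (m * (t * γ)) ≤ ∏ i ∈ P, w i := by
    intro P hP hPγ
    rw [← exp_sum, ← mul_sum, sum_sub_distrib, ← card_mul_expect, sum_const,
      (mem_powersetCard.1 hP).2, nsmul_eq_mul, exp_le_exp]
    nlinarith [mul_le_mul_of_nonneg_left hPγ ht]
  have hw : ∀ i ∈ univ, 0 ≤ w i := fun i _ => (exp_pos _).le
  have key : (#{P ∈ powersetCard m univ | 𝔼 i, g i + γ ≤ 𝔼 i ∈ P, g i} : ℝ) * exp (m * (t * γ)) ≤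
      (Fintype.card ι).choose m * exp (m * ((b - a) ^ 2 * t ^ 2 / 8)) := calc
    _ ≤ ∑ P ∈ powersetCard m univ with 𝔼 i, g i + γ ≤ 𝔼 i ∈ P, g i, ∏ i ∈ P, w i := by
        rw [← nsmul_eq_mul]
        exact card_nsmul_le_sum _ _ _ fun P hP => htilt P (mem_filter.1 hP).1 (mem_filter.1 hP).2
    _ ≤ ∑ P ∈ powersetCard m univ, ∏ i ∈ P, w i :=
        sum_le_sum_of_subset_of_nonneg (filter_subset _ _) fun P _ _ =>
          prod_nonneg fun i _ => hw i (mem_univ i)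
    _ ≤ (#univ).choose m * (𝔼 i, w i) ^ m := sum_powersetCard_prod_le_choose_mul_expect_pow hw m
    _ ≤ _ := by
        rw [card_univ, exp_nat_mul]
        gcongr
        exact expect_exp_mul_sub_expect_le hg t
  rwa [mul_sub, exp_sub, mul_div_assoc', le_div_iff₀ (exp_pos _)]

theorem card_filter_lt_abs_expect_sub_expect_le {g : ι → ℝ} {a b : ℝ} (hab : a < b)
    (hg : ∀ i, g i ∈ Set.Icc a b) {γ : ℝ} (hγ : 0 ≤ γ) (m : ℕ) :
    (#{P ∈ powersetCard m univ | γ < |𝔼 i ∈ P, g i - 𝔼 i, g i|} : ℝ) ≤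
      2 * (Fintype.card ι).choose m * exp (-(2 * m * γ ^ 2 / (b - a) ^ 2)) := by
  have hneg : ∀ i, -g i ∈ Set.Icc (-b) (-a) := fun i => ⟨neg_le_neg (hg i).2, neg_le_neg (hg i).1⟩
  have ht : 0 ≤ 4 * γ / (b - a) ^ 2 := by positivity
  have hexp : (m : ℝ) * ((b - a) ^ 2 * (4 * γ / (b - a) ^ 2) ^ 2 / 8 - 4 * γ / (b - a) ^ 2 * γ) =
      -(2 * m * γ ^ 2 / (b - a) ^ 2) := by
    field_simp [(sub_pos.2 hab).ne']; ring
  have hupper := card_filter_expect_add_le_expect_le hg m γ ht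
  have hlower := card_filter_expect_add_le_expect_le hneg m γ ht
  rw [show -a - -b = b - a by ring, hexp] at hlower
  rw [hexp] at hupper
  simp only [expect_neg_distrib] at hlower
  calc _ ≤ (#({P ∈ powersetCard m (univ : Finset ι) | 𝔼 i, g i + γ ≤ 𝔼 i ∈ P, g i} ∪
          {P ∈ powersetCard m (univ : Finset ι) | -𝔼 i, g i + γ ≤ -𝔼 i ∈ P, g i}) : ℝ) := by
        gcongr
        intro P
        simp only [mem_filter, mem_union, lt_abs]
        rintro ⟨hP, h | h⟩
        · exact Or.inl ⟨hP, by linarith⟩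
        · exact Or.inr ⟨hP, by linarith⟩
    _ ≤ (#{P ∈ powersetCard m (univ : Finset ι) | 𝔼 i, g i + γ ≤ 𝔼 i ∈ P, g i} : ℝ) +
          #{P ∈ powersetCard m (univ : Finset ι) | -𝔼 i, g i + γ ≤ -𝔼 i ∈ P, g i} := by
        exact_mod_cast card_union_le _ _
    _ ≤ _ := by linarith

end Sampling

theorem one_sub_card_mul_le_card_filter_forall_div {α β : Type*} [Fintype β] {s : Finset α}
    (hs : s.Nonempty) (p : β → α → Prop) [∀ b, DecidablePred (p b)]
    [DecidablePred fun a => ∀ b, p b a] {ε : ℝ} (hε : ∀ b, (#{a ∈ s | ¬p b a} : ℝ) ≤ ε * #s) :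
    1 - Fintype.card β * ε ≤ #{a ∈ s | ∀ b, p b a} / #s := by
  classical
  have hsplit := card_filter_add_card_filter_not (s := s) (p := fun a => ∀ b, p b a)
  have hunion : {a ∈ s | ¬∀ b, p b a} ⊆ univ.biUnion fun b => {a ∈ s | ¬p b a} := by
    intro a
    simp only [mem_filter, mem_biUnion, mem_univ, true_and, not_forall]
    rintro ⟨ha, b, hb⟩
    exact ⟨b, ha, hb⟩
  have hbad : (#{a ∈ s | ¬∀ b, p b a} : ℝ) ≤ Fintype.card β * ε * #s := by
    calc _ ≤ (∑ b, #{a ∈ s | ¬p b a} : ℝ) := by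
          exact_mod_cast (card_le_card hunion).trans card_biUnion_le
      _ ≤ ∑ _b : β, ε * #s := sum_le_sum fun b _ => hε b
      _ = _ := by rw [sum_const, card_univ, nsmul_eq_mul, mul_assoc]
  have hspos : (0 : ℝ) < #s := by exact_mod_cast hs.card_pos
  rw [le_div_iff₀ hspos]
  have : (#{a ∈ s | ∀ b, p b a} : ℝ) + #{a ∈ s | ¬∀ b, p b a} = #s := by exact_mod_cast hsplit
  rw [sub_mul, one_mul]
  linarith

open Real in
theorem pow_mul_two_mul_exp_neg_two_mul_le {q x : ℝ} (hq : 1 ≤ q) (s : ℕ) {k : ℕ} (hk : 0 < k)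
    (hx : k + s * log q ≤ x) :
    q ^ s * (2 * exp (-(2 * x))) ≤ exp (-k) := by
  have hslog : 0 ≤ s * log q := mul_nonneg s.cast_nonneg (log_nonneg hq)
  have htwo : 2 ≤ exp k := by
    have : (1 : ℝ) ≤ k := by exact_mod_cast hk
    linarith [add_one_le_exp (k : ℝ)]
  rw [← exp_log (by linarith : 0 < q), ← exp_nat_mul, mul_left_comm, ← exp_add]
  calc _ ≤ exp k * exp (-(2 * k)) := by
        gcongr
        linarith
    _ = _ := by rw [← exp_add]; ring_nf

open scoped Classical in
/-- there is a universal constant `c > 0` such that for a uniformly random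
`X' ⊆ X` of size `⌈(k + |S|·log|Σ|)/γ²⌉`, with probability at least `1 - e^{-ck}`,
`|bias_{S,h}^{X'} - bias_{S,h}| ≤ γ` holds simultaneously for every `h : S → Σ`. -/
theorem free_game_toss_sample :
    ∃ c : ℝ, 0 < c ∧
      ∀ (X Y A : Type) [Fintype X] [Fintype Y] [Fintype A] [DecidableEq A] [Nonempty A]
        (π : X → Y → Finset (A × A)) (S : Finset X) (γ : ℝ) (k : ℕ),
        0 < γ → 0 < k →
        ∀ F : ({x // x ∈ S} → A) → (Y → A), (∀ h, IsInducedY π S h (F h)) →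
        ∀ m : ℕ,
          m = ⌈((k : ℝ) + (S.card : ℝ) * Real.log (Fintype.card A : ℝ)) / γ ^ 2⌉₊ →
          m ≤ Fintype.card X →
          1 - Real.exp (-(c * (k : ℝ))) ≤
            (((Finset.powersetCard m (Finset.univ : Finset X)).filter fun X' =>
                ∀ h : {x // x ∈ S} → A,
                  |(1 / (X'.card : ℝ)) * ∑ x ∈ X', gMax π (F h) x -
                      (1 / (Fintype.card X : ℝ)) * ∑ x : X, gMax π (F h) x| ≤ γ).card : ℝ) /
              ((Finset.powersetCard m (Finset.univ : Finset X)).card : ℝ) := by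
  refine ⟨1, one_pos, ?_⟩
  intro X Y A _ _ _ _ _ π S γ k hγ hk F _ m hm hmX
  have hmγ : (k : ℝ) + #S * Real.log (Fintype.card A) ≤ m * γ ^ 2 := by
    rw [← div_le_iff₀ (by positivity)]
    exact hm ▸ Nat.le_ceil _
  have hdev : ∀ h : {x // x ∈ S} → A,
      (#{X' ∈ powersetCard m univ | ¬|(1 / (X'.card : ℝ)) * ∑ x ∈ X', gMax π (F h) x -
        (1 / (Fintype.card X : ℝ)) * ∑ x : X, gMax π (F h) x| ≤ γ} : ℝ) ≤
        2 * Real.exp (-(2 * (m * γ ^ 2))) * #(powersetCard m (univ : Finset X)) := by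
    intro h
    have := card_filter_lt_abs_expect_sub_expect_le zero_lt_one (gMax_mem_Icc π (F h)) hγ.le m
    simp only [not_le, one_div_mul_eq_div, ← expect_eq_sum_div_card, ← Fintype.expect_eq_sum_div_card]
    convert this using 1
    rw [card_powersetCard, card_univ, sub_zero, one_pow, div_one, mul_right_comm]
    congr 2
    ring
  refine le_trans ?_ (one_sub_card_mul_le_card_filter_forall_div
    (powersetCard_nonempty.2 (by simpa using hmX)) _ hdev)
  have hA : (1 : ℝ) ≤ Fintype.card A := by exact_mod_cast Fintype.card_pos
  rw [one_mul, Fintype.card_fun, Fintype.card_coe, Nat.cast_pow]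
  exact sub_le_sub_left (pow_mul_two_mul_exp_neg_two_mul_le hA #S hk hmγ) 1
end

section
/- Let F be a finite field, let m ≥ 1, let A ⊆ F^m with |A| = ρ·|F|^m, and let ε > 0. If x and y are chosen independently and uniformly at random from F^m, then the probability that the fraction of t ∈ F with x + t·y ∈ A differs from ρ by more than ε is at most ρ/(ε²·|F|); that is, Pr[ | |{t ∈ F : x + t·y ∈ A}|/|F| − ρ | > ε ] ≤ ρ/(ε²·|F|). -/
/-!
For fixed `x, y`, the number of `t` with `x + t • y ∈ A` is a sum of `|F|` indicators of events
`Eₜ = {(x, y) | x + t • y ∈ A}`. Each `Eₜ` has density `ρ`, and for `s ≠ t` the map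
`(x, y) ↦ (x + s • y, x + t • y)` is a bijection of `(F^m)²` (its determinant is `t - s`), so the
events are pairwise independent. Hence the count has variance `|F| ρ (1 - ρ)`, and Chebyshev's
inequality gives the bound.
-/

open Finset

theorem sq_mul_card_filter_lt_abs_le_sum_sq {Ω : Type*} [Fintype Ω] (f : Ω → ℝ) {ε : ℝ}
    (hε : 0 ≤ ε) : ε ^ 2 * #{ω | ε < |f ω|} ≤ ∑ ω, f ω ^ 2 :=
  calc ε ^ 2 * #{ω | ε < |f ω|} = ∑ ω ∈ {ω | ε < |f ω|}, ε ^ 2 := by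
        rw [sum_const, nsmul_eq_mul, mul_comm]
    _ ≤ ∑ ω ∈ {ω | ε < |f ω|}, f ω ^ 2 := sum_le_sum fun ω hω => by
        rw [← sq_abs (f ω)]
        exact pow_le_pow_left₀ hε (mem_filter.mp hω).2.le 2
    _ ≤ ∑ ω, f ω ^ 2 := sum_le_sum_of_subset_of_nonneg (subset_univ _) fun ω _ _ => sq_nonneg _

section PairwiseIndependent

variable {Ω T : Type*} [Fintype Ω] (P : T → Ω → Prop) [DecidableRel P] {p : ℝ}

theorem sum_indicator_sub_mul_indicator_sub (s t : T) :
    ∑ ω, ((if P s ω then 1 else 0) - p) * ((if P t ω then 1 else 0) - p) =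
      #{ω | P s ω ∧ P t ω} - p * #{ω | P s ω} - p * #{ω | P t ω} + p ^ 2 * Fintype.card Ω := by
  have hexpand : ∀ ω, ((if P s ω then (1 : ℝ) else 0) - p) * ((if P t ω then 1 else 0) - p) =
      (if P s ω ∧ P t ω then 1 else 0) - p * (if P s ω then 1 else 0) -
        p * (if P t ω then 1 else 0) + p ^ 2 := by
    intro ω; split_ifs <;> simp_all <;> ring
  simp only [hexpand, sum_add_distrib, sum_sub_distrib, ← mul_sum, sum_boole, sum_const,
    card_univ, nsmul_eq_mul]
  ring

theorem sum_sq_card_filter_sub_eq [Fintype T]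
    (hp : ∀ t, (#{ω | P t ω} : ℝ) = p * Fintype.card Ω)
    (hpair : ∀ s t, s ≠ t → (#{ω | P s ω ∧ P t ω} : ℝ) = p ^ 2 * Fintype.card Ω) :
    ∑ ω, ((#{t | P t ω} : ℝ) - Fintype.card T * p) ^ 2 =
      Fintype.card T * (p * (1 - p) * Fintype.card Ω) := by
  have hcentre : ∀ ω, (#{t | P t ω} : ℝ) - Fintype.card T * p =
      ∑ t, ((if P t ω then 1 else 0) - p) := by
    intro ω
    rw [sum_sub_distrib, sum_boole, sum_const, card_univ, nsmul_eq_mul]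
  have hcov : ∀ s, ∑ t, ∑ ω,
      ((if P s ω then (1 : ℝ) else 0) - p) * ((if P t ω then 1 else 0) - p) =
        p * (1 - p) * Fintype.card Ω := by
    intro s
    rw [sum_eq_single s (fun t _ hts => ?_) (by simp), sum_indicator_sub_mul_indicator_sub]
    · simp only [and_self, hp]; ring
    · rw [sum_indicator_sub_mul_indicator_sub, hpair s t hts.symm, hp, hp]; ring
  simp_rw [hcentre, sq, sum_mul_sum]
  rw [sum_comm]
  simp_rw [sum_comm (s := (univ : Finset Ω)) (t := (univ : Finset T)), hcov, sum_const,
    card_univ, nsmul_eq_mul]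

theorem card_filter_lt_abs_card_div_card_sub_le [Fintype T] [Nonempty T]
    (hp : ∀ t, (#{ω | P t ω} : ℝ) = p * Fintype.card Ω)
    (hpair : ∀ s t, s ≠ t → (#{ω | P s ω ∧ P t ω} : ℝ) = p ^ 2 * Fintype.card Ω)
    {ε : ℝ} (hε : 0 < ε) :
    (#{ω | ε < |(#{t | P t ω} : ℝ) / Fintype.card T - p|} : ℝ) ≤
      p * (1 - p) * Fintype.card Ω / (ε ^ 2 * Fintype.card T) := by
  have hT : (0 : ℝ) < Fintype.card T := by exact_mod_cast Fintype.card_pos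
  have hvar : ∑ ω, ((#{t | P t ω} : ℝ) / Fintype.card T - p) ^ 2 =
      p * (1 - p) * Fintype.card Ω / Fintype.card T := by
    have hscale : ∀ ω, ((#{t | P t ω} : ℝ) / Fintype.card T - p) ^ 2 =
        ((#{t | P t ω} : ℝ) - Fintype.card T * p) ^ 2 / Fintype.card T ^ 2 := by
      intro ω; field_simp
    rw [sum_congr rfl fun ω _ => hscale ω, ← sum_div, sum_sq_card_filter_sub_eq P hp hpair]
    field_simp
  have hcheb := sq_mul_card_filter_lt_abs_le_sum_sq
    (fun ω => (#{t | P t ω} : ℝ) / Fintype.card T - p) hε.le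
  rw [hvar, le_div_iff₀ hT] at hcheb
  rw [le_div_iff₀ (by positivity)]
  linarith

end PairwiseIndependent

section Lines

variable {F V : Type*} [Field F] [AddCommGroup V] [Module F V] [Fintype V] [DecidableEq V]

theorem card_filter_add_smul_mem (A : Finset V) (t : F) :
    #{v : V × V | v.1 + t • v.2 ∈ A} = #A * Fintype.card V := by
  let shear : V × V ≃ V × V :=
    { toFun := fun v => (v.1 + t • v.2, v.2)
      invFun := fun v => (v.1 - t • v.2, v.2)
      left_inv := fun v => by simp
      right_inv := fun v => by simp }
  rw [← card_univ, ← card_product]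
  exact card_equiv shear (fun v => by simp [shear])

theorem card_filter_add_smul_mem_and_add_smul_mem (A : Finset V) {s t : F} (hst : s ≠ t) :
    #{v : V × V | v.1 + s • v.2 ∈ A ∧ v.1 + t • v.2 ∈ A} = #A * #A := by
  have hts : t - s ≠ 0 := sub_ne_zero.mpr hst.symm
  let e : V × V ≃ V × V :=
    { toFun := fun v => (v.1 + s • v.2, v.1 + t • v.2)
      invFun := fun u => (u.1 - s • (t - s)⁻¹ • (u.2 - u.1), (t - s)⁻¹ • (u.2 - u.1))
      left_inv := fun v => by
        have h : v.1 + t • v.2 - (v.1 + s • v.2) = (t - s) • v.2 := by module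
        simp only [h, inv_smul_smul₀ hts, add_sub_cancel_right]
      right_inv := fun u => by
        have h : u.1 - s • (t - s)⁻¹ • (u.2 - u.1) + t • (t - s)⁻¹ • (u.2 - u.1) =
            u.1 + (t - s) • (t - s)⁻¹ • (u.2 - u.1) := by module
        simp only [sub_add_cancel, h, smul_inv_smul₀ hts, add_sub_cancel] }
  rw [← card_product]
  exact card_equiv e (fun v => by simp [e])

end Lines

open scoped Classical in
theorem line_sampling_general {F : Type*} [Field F] [Fintype F] [DecidableEq F]
    (m : ℕ)
    (ρ ε : ℝ) (hε : 0 < ε)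
    (A : Finset (Fin m → F)) (hA : (A.card : ℝ) = ρ * (Fintype.card F : ℝ) ^ m) :
    (((Finset.univ : Finset ((Fin m → F) × (Fin m → F))).filter fun p =>
        ε < |(((Finset.univ : Finset F).filter fun t => p.1 + t • p.2 ∈ A).card : ℝ) /
              (Fintype.card F : ℝ) - ρ|).card : ℝ) /
      (Fintype.card ((Fin m → F) × (Fin m → F)) : ℝ) ≤
    ρ / (ε ^ 2 * (Fintype.card F : ℝ)) := by
  have hΩ : (Fintype.card ((Fin m → F) × (Fin m → F)) : ℝ) =
      ((Fintype.card F : ℝ) ^ m) ^ 2 := by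
    simp [Fintype.card_prod, sq]
  have hp (t : F) : (#{v : (Fin m → F) × (Fin m → F) | v.1 + t • v.2 ∈ A} : ℝ) =
      ρ * Fintype.card ((Fin m → F) × (Fin m → F)) := by
    rw [card_filter_add_smul_mem, Nat.cast_mul, hA, hΩ]
    simp only [Fintype.card_fun, Fintype.card_fin, Nat.cast_pow]
    ring
  have hpair (s t : F) (hst : s ≠ t) :
      (#{v : (Fin m → F) × (Fin m → F) | v.1 + s • v.2 ∈ A ∧ v.1 + t • v.2 ∈ A} : ℝ) =
        ρ ^ 2 * Fintype.card ((Fin m → F) × (Fin m → F)) := by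
    rw [card_filter_add_smul_mem_and_add_smul_mem A hst, Nat.cast_mul, hA, hΩ]
    ring
  have hsample := card_filter_lt_abs_card_div_card_sub_le
    (fun (t : F) (v : (Fin m → F) × (Fin m → F)) => v.1 + t • v.2 ∈ A) (p := ρ) hp hpair hε
  rw [div_le_iff₀ (by exact_mod_cast Fintype.card_pos)]
  refine hsample.trans ?_
  rw [div_mul_eq_mul_div]
  gcongr
  nlinarith [sq_nonneg ρ]

open scoped Classical in
/-- for `A ⊆ F^m` of density `ρ` and uniformly random independent
`x, y ∈ F^m`, the probability that the fraction of `t ∈ F` with `x + t·y ∈ A` deviates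
from `ρ` by more than `ε` is at most `ρ/(ε²·|F|)`. -/
theorem line_sampling {F : Type*} [Field F] [Fintype F] [DecidableEq F]
    (m : ℕ) (hm : 1 ≤ m)
    (ρ ε : ℝ) (hε : 0 < ε)
    (A : Finset (Fin m → F)) (hA : (A.card : ℝ) = ρ * (Fintype.card F : ℝ) ^ m) :
    (((Finset.univ : Finset ((Fin m → F) × (Fin m → F))).filter fun p =>
        ε < |(((Finset.univ : Finset F).filter fun t => p.1 + t • p.2 ∈ A).card : ℝ) /
              (Fintype.card F : ℝ) - ρ|).card : ℝ) /
      (Fintype.card ((Fin m → F) × (Fin m → F)) : ℝ) ≤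
    ρ / (ε ^ 2 * (Fintype.card F : ℝ)) :=
  line_sampling_general m ρ ε hε A hA
end

section
/- Let F be a finite field, let m ≥ 1, let A ⊆ F^m with |A| = ρ·|F|^m, and let ε > 0. If x, y, z are chosen independently and uniformly at random from F^m, then the probability that the fraction of pairs (t₁,t₂) ∈ F² with x + t₁·y + t₂·(z−x) ∈ A differs from ρ by more than ε is at most ρ/(ε²·|F|); that is, Pr[ | |{(t₁,t₂) ∈ F×F : x + t₁·y + t₂·(z−x) ∈ A}|/|F|² − ρ | > ε ] ≤ ρ/(ε²·|F|). -/
/-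
For fixed `t = (t₁, t₂)` the point `x + t₁ y + t₂ (z - x)` is the image of `(x, y, z)` under
a surjective linear map, so it is uniformly distributed; for `t ≠ t'` the pair of maps is
jointly surjective, so the two points are independent. Hence the events "the `t`-th point
lies in `A`" have probability `ρ` and are pairwise independent, the number of hits has mean
`ρ q²` and variance `ρ (1 - ρ) q²` (with `q = |F|`), and Chebyshev's inequality bounds the
probability of a deviation by `ρ (1 - ρ) / (ε² q²) ≤ ρ / (ε² q)`.
-/

open Finset

theorem card_filter_mem_eq_of_surjective {G W F : Type*} [AddGroup G] [Fintype G]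
    [AddGroup W] [Fintype W] [DecidableEq W] [FunLike F G W] [AddMonoidHomClass F G W]
    (f : F) (hf : Function.Surjective f) (S : Finset W) :
    (#{v | f v ∈ S} : ℝ) = #S / Fintype.card W * Fintype.card G := by
  have hfiber (w : W) : #{v | f v = w} = #{v | f v = 0} :=
    AddMonoidHom.card_fiber_eq_of_mem_range f (hf w) (hf 0)
  have hS : #{v | f v ∈ S} = #S * #{v | f v = 0} := by
    rw [card_eq_sum_card_fiberwise (f := f) (s := {v | f v ∈ S}) (t := S)
      fun v hv => (mem_filter.1 hv).2, ← smul_eq_mul, ← sum_const]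
    refine sum_congr rfl fun w hw => ?_
    rw [filter_filter, ← hfiber w]
    congr 1
    exact filter_congr fun v _ => and_iff_right_of_imp fun h => h ▸ hw
  have hG : Fintype.card G = Fintype.card W * #{v | f v = 0} := by
    rw [← card_univ, card_eq_sum_card_fiberwise fun v _ => mem_univ (f v)]
    simp [hfiber]
  have hW : (Fintype.card W : ℝ) ≠ 0 := by exact_mod_cast Fintype.card_ne_zero
  rw [hS, hG]
  push_cast
  field_simp

theorem card_filter_lt_abs_mul_sq_le_sum_sq {ι : Type*} (s : Finset ι) (f : ι → ℝ) {δ : ℝ}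
    (hδ : 0 ≤ δ) : #{i ∈ s | δ < |f i|} * δ ^ 2 ≤ ∑ i ∈ s, f i ^ 2 := by
  calc (#{i ∈ s | δ < |f i|} : ℝ) * δ ^ 2 = #{i ∈ s | δ < |f i|} • δ ^ 2 := by
        rw [nsmul_eq_mul]
    _ ≤ ∑ i ∈ s with δ < |f i|, f i ^ 2 := by
        refine card_nsmul_le_sum _ _ _ fun i hi => ?_
        rw [← sq_abs (f i)]
        exact pow_le_pow_left₀ hδ (mem_filter.1 hi).2.le 2
    _ ≤ ∑ i ∈ s, f i ^ 2 :=
        sum_le_sum_of_subset_of_nonneg (filter_subset _ _) fun _ _ _ => sq_nonneg _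

section PairwiseIndependent

variable {Ω T : Type*} [Fintype Ω] [Fintype T] [DecidableEq Ω] (E : T → Finset Ω)

theorem sum_card_filter_mem : ∑ p, #{t | p ∈ E t} = ∑ t, #(E t) := by
  simpa [bipartiteAbove, bipartiteBelow] using
    sum_card_bipartiteAbove_eq_sum_card_bipartiteBelow (s := univ) (t := univ)
      (fun p t => p ∈ E t)

theorem sum_card_filter_mem_sq : ∑ p, #{t | p ∈ E t} ^ 2 = ∑ t, ∑ t', #(E t ∩ E t') := by
  rw [← Fintype.sum_prod_type', ← sum_card_filter_mem]
  refine sum_congr rfl fun p _ => ?_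
  rw [sq, ← card_product, ← filter_product, univ_product_univ]
  simp

variable [DecidableEq T]

theorem sum_sq_card_filter_mem_sub {ρ : ℝ} (h1 : ∀ t, (#(E t) : ℝ) = ρ * Fintype.card Ω)
    (h2 : ∀ t t', t ≠ t' → (#(E t ∩ E t') : ℝ) = ρ ^ 2 * Fintype.card Ω) :
    ∑ p, ((#{t | p ∈ E t} : ℝ) - Fintype.card T * ρ) ^ 2
      = Fintype.card T * (ρ - ρ ^ 2) * Fintype.card Ω := by
  have hS1 : ∑ p, (#{t | p ∈ E t} : ℝ) = Fintype.card T * (ρ * Fintype.card Ω) := by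
    rw [← Nat.cast_sum, sum_card_filter_mem, Nat.cast_sum]
    simp [h1]
  have hrow (t : T) : ∑ t', (#(E t ∩ E t') : ℝ)
      = ρ * Fintype.card Ω + (Fintype.card T - 1) * (ρ ^ 2 * Fintype.card Ω) := by
    rw [← add_sum_erase _ _ (mem_univ t), inter_self, h1,
      sum_congr rfl fun t' ht' => h2 t t' (ne_of_mem_erase ht').symm, sum_const,
      nsmul_eq_mul, cast_card_erase_of_mem (mem_univ t), card_univ]
  have hS2 : ∑ p, (#{t | p ∈ E t} : ℝ) ^ 2 = Fintype.card T *
      (ρ * Fintype.card Ω + (Fintype.card T - 1) * (ρ ^ 2 * Fintype.card Ω)) := by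
    simp only [← Nat.cast_pow, ← Nat.cast_sum, sum_card_filter_mem_sq]
    push_cast
    simp only [hrow, sum_const, card_univ, nsmul_eq_mul]
  simp only [sub_sq, sum_add_distrib, sum_sub_distrib, ← sum_mul, ← mul_sum, hS1, hS2,
    sum_const, card_univ, nsmul_eq_mul]
  ring

theorem card_filter_deviation_mul_le [Nonempty T] {ρ ε : ℝ} (hε : 0 < ε)
    (h1 : ∀ t, (#(E t) : ℝ) = ρ * Fintype.card Ω)
    (h2 : ∀ t t', t ≠ t' → (#(E t ∩ E t') : ℝ) = ρ ^ 2 * Fintype.card Ω) :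
    #{p | ε < |(#{t | p ∈ E t} : ℝ) / Fintype.card T - ρ|} * (ε ^ 2 * Fintype.card T)
      ≤ (ρ - ρ ^ 2) * Fintype.card Ω := by
  have hT : (0 : ℝ) < Fintype.card T := by exact_mod_cast Fintype.card_pos
  have hdev (p : Ω) : ε < |(#{t | p ∈ E t} : ℝ) / Fintype.card T - ρ|
      ↔ ε * Fintype.card T < |(#{t | p ∈ E t} : ℝ) - Fintype.card T * ρ| := by
    rw [div_sub' hT.ne', abs_div, abs_of_pos hT, lt_div_iff₀ hT]
  have hcheb := card_filter_lt_abs_mul_sq_le_sum_sq univ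
    (fun p => (#{t | p ∈ E t} : ℝ) - Fintype.card T * ρ)
    (by positivity : 0 ≤ ε * Fintype.card T)
  rw [sum_sq_card_filter_mem_sub E h1 h2] at hcheb
  simp only [← hdev] at hcheb
  refine le_of_mul_le_mul_right ?_ hT
  linarith

end PairwiseIndependent

section Plane

variable {F M : Type*} [Field F] [AddCommGroup M] [Module F M]

def planeMap (t : F × F) : M × M × M →ₗ[F] M where
  toFun p := p.1 + t.1 • p.2.1 + t.2 • (p.2.2 - p.1)
  map_add' p q := by simp only [Prod.fst_add, Prod.snd_add]; module
  map_smul' c p := by simp only [Prod.smul_fst, Prod.smul_snd, RingHom.id_apply]; module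

theorem planeMap_apply (t : F × F) (p : M × M × M) :
    planeMap t p = p.1 + t.1 • p.2.1 + t.2 • (p.2.2 - p.1) := rfl

theorem planeMap_surjective (t : F × F) : Function.Surjective (planeMap (M := M) t) :=
  fun a => ⟨(a, 0, a), by simp [planeMap_apply]⟩

theorem planeMap_prod_surjective {t t' : F × F} (h : t ≠ t') :
    Function.Surjective ((planeMap (M := M) t).prod (planeMap t')) := by
  rintro ⟨a, b⟩
  by_cases h1 : t.1 = t'.1
  · have h2 : t.2 - t'.2 ≠ 0 := sub_ne_zero.2 fun h2 => h (Prod.ext h1 h2)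
    set u := (t.2 - t'.2)⁻¹ • (a - b)
    refine ⟨(a - t.2 • u, 0, a - t.2 • u + u), ?_⟩
    simp only [LinearMap.prod_apply, Function.prod_apply, planeMap_apply, Prod.mk.injEq, u]
    constructor <;> match_scalars <;> field_simp <;> ring
  · have h1 : t.1 - t'.1 ≠ 0 := sub_ne_zero.2 h1
    set y := (t.1 - t'.1)⁻¹ • (a - b)
    refine ⟨(a - t.1 • y, y, a - t.1 • y), ?_⟩
    simp only [LinearMap.prod_apply, Function.prod_apply, planeMap_apply, Prod.mk.injEq, y]
    constructor <;> match_scalars <;> field_simp <;> ring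

end Plane

theorem card_plane_deviation_mul_le {F M : Type*} [Field F] [Fintype F] [AddCommGroup M]
    [Module F M] [Fintype M] [DecidableEq M] {A : Finset M} {ρ ε : ℝ}
    (hA : (#A : ℝ) = ρ * Fintype.card M) (hε : 0 < ε) :
    #{p : M × M × M | ε < |(#{t : F × F | planeMap t p ∈ A} : ℝ) / Fintype.card F ^ 2 - ρ|}
        * (ε ^ 2 * Fintype.card F ^ 2)
      ≤ (ρ - ρ ^ 2) * Fintype.card (M × M × M) := by
  classical
  have hρA : (#A : ℝ) / Fintype.card M = ρ := by
    rw [hA, mul_div_cancel_right₀ _ (by exact_mod_cast Fintype.card_ne_zero)]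
  let E (t : F × F) : Finset (M × M × M) := {p | planeMap t p ∈ A}
  have hmem (t : F × F) (p) : p ∈ E t ↔ planeMap t p ∈ A := mem_filter_univ p
  have h1 (t : F × F) : (#(E t) : ℝ) = ρ * Fintype.card (M × M × M) := by
    rw [card_filter_mem_eq_of_surjective _ (planeMap_surjective t), hρA]
  have h2 (t t' : F × F) (h : t ≠ t') :
      (#(E t ∩ E t') : ℝ) = ρ ^ 2 * Fintype.card (M × M × M) := by
    have hE : E t ∩ E t' = ({p | (planeMap t).prod (planeMap t') p ∈ A ×ˢ A} : Finset _) := by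
      ext p
      rw [mem_inter, hmem, hmem, mem_filter_univ, LinearMap.prod_apply, Function.prod_apply,
        mem_product]
    rw [hE, card_filter_mem_eq_of_surjective _ (planeMap_prod_surjective h), card_product,
      Fintype.card_prod M M, ← hρA]
    push_cast
    ring
  have hfiber (p : M × M × M) : #{t | p ∈ E t} = #{t | planeMap t p ∈ A} :=
    congrArg card (filter_congr fun t _ => hmem t p)
  simpa only [hfiber, Fintype.card_prod F F, ← sq, Nat.cast_pow] using
    card_filter_deviation_mul_le E hε h1 h2

open scoped Classical in
theorem plane_sampling_general {F : Type*} [Field F] [Fintype F] [DecidableEq F]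
    (m : ℕ)
    (ρ ε : ℝ) (hε : 0 < ε)
    (A : Finset (Fin m → F)) (hA : (A.card : ℝ) = ρ * (Fintype.card F : ℝ) ^ m) :
    (((Finset.univ : Finset ((Fin m → F) × (Fin m → F) × (Fin m → F))).filter fun p =>
        ε < |(((Finset.univ : Finset (F × F)).filter fun t =>
                p.1 + t.1 • p.2.1 + t.2 • (p.2.2 - p.1) ∈ A).card : ℝ) /
              (Fintype.card F : ℝ) ^ 2 - ρ|).card : ℝ) /
      (Fintype.card ((Fin m → F) × (Fin m → F) × (Fin m → F)) : ℝ) ≤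
    ρ / (ε ^ 2 * (Fintype.card F : ℝ)) := by
  have hq : (1 : ℝ) ≤ Fintype.card F := by exact_mod_cast Fintype.card_pos
  have hA' : (#A : ℝ) = ρ * Fintype.card (Fin m → F) := by simp [hA]
  have hΩ : (0 : ℝ) < Fintype.card ((Fin m → F) × (Fin m → F) × (Fin m → F)) := by
    exact_mod_cast Fintype.card_pos
  rw [div_le_div_iff₀ hΩ (by positivity)]
  calc _ ≤ _ * (ε ^ 2 * (Fintype.card F : ℝ) ^ 2) :=
        mul_le_mul_of_nonneg_left (mul_le_mul_of_nonneg_left (le_self_pow₀ hq two_ne_zero)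
          (sq_nonneg ε)) (Nat.cast_nonneg _)
    _ ≤ (ρ - ρ ^ 2) * Fintype.card ((Fin m → F) × (Fin m → F) × (Fin m → F)) :=
        card_plane_deviation_mul_le hA' hε
    _ ≤ ρ * Fintype.card ((Fin m → F) × (Fin m → F) × (Fin m → F)) := by
        gcongr
        exact sub_le_self ρ (sq_nonneg ρ)

open scoped Classical in
/-- for `A ⊆ F^m` of density `ρ` and uniformly random independent
`x, y, z ∈ F^m`, the probability that the fraction of pairs `(t₁,t₂) ∈ F²` with
`x + t₁·y + t₂·(z-x) ∈ A` deviates from `ρ` by more than `ε` is at most `ρ/(ε²·|F|)`. -/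
theorem plane_sampling {F : Type*} [Field F] [Fintype F] [DecidableEq F]
    (m : ℕ) (hm : 1 ≤ m)
    (ρ ε : ℝ) (hε : 0 < ε)
    (A : Finset (Fin m → F)) (hA : (A.card : ℝ) = ρ * (Fintype.card F : ℝ) ^ m) :
    (((Finset.univ : Finset ((Fin m → F) × (Fin m → F) × (Fin m → F))).filter fun p =>
        ε < |(((Finset.univ : Finset (F × F)).filter fun t =>
                p.1 + t.1 • p.2.1 + t.2 • (p.2.2 - p.1) ∈ A).card : ℝ) /
              (Fintype.card F : ℝ) ^ 2 - ρ|).card : ℝ) /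
      (Fintype.card ((Fin m → F) × (Fin m → F) × (Fin m → F)) : ℝ) ≤
    ρ / (ε ^ 2 * (Fintype.card F : ℝ)) :=
  plane_sampling_general m ρ ε hε A hA
end

section
/- Let F be a finite field, let m ≥ 3 and d < |F| be natural numbers, let f : F^m → F, and let 0 < ε < ρ satisfy ρ − ε ≥ 2·√(d/|F|). Choose (x,y,z) uniformly at random among all triples in (F^m)³ such that y and z−x are linearly independent. Let L(x,y,z) be the set of all bivariate polynomials q over F of total degree at most d such that q(t₁,t₂) = f(x + t₁·y + t₂·(z−x)) for at least (ρ−ε)·|F|² of the pairs (t₁,t₂) ∈ F². Then the probability that there exist distinct q, q' ∈ L(x,y,z) with q(t,0) = q'(t,0) for all t ∈ F is at most 4d/((ρ−ε)²·|F|). -/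
/-!
Shearing `(x, y, z) ↦ (x, y + c • (z - x), z)` permutes the admissible triples and keeps the
plane, while its line `t₂ = 0` becomes the line `t₂ = c t₁` of the original parametrisation.
Averaging over `c`, the probability is at most `1/|F|` times the largest number of slopes `c`
for which two distinct members of one list `L` agree on the line `t₂ = c t₁`.
By Schwartz–Zippel two distinct members of `L` agree on at most `d|F|` points of the plane, so
a Johnson-type (Cauchy–Schwarz) bound gives `|L| ≤ 2/(ρ - ε)`; and their difference vanishes
on at most `d` lines through the origin, since each such line carries `|F| - 1` further zeros.
Hence at most `d|L|² ≤ 4d/(ρ - ε)²` slopes are bad.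
-/

open Finset

variable {F : Type*} [Field F] [Fintype F] [DecidableEq F] {m : ℕ}

/-- The point of the plane through `x = p.1` spanned by the directions `y = p.2.1` and
`z - x = p.2.2 - p.1`, at parameters `(t₁, t₂)`. -/
def planePoint (p : (Fin m → F) × (Fin m → F) × (Fin m → F)) (t : F × F) : Fin m → F :=
  p.1 + t.1 • p.2.1 + t.2 • (p.2.2 - p.1)

/-- `q ∈ L(x,y,z)`: `q` is a bivariate polynomial of total degree at most `d` agreeing with
`f` on at least a `θ` fraction of the points of the plane determined by `p = (x,y,z)`. -/
def InPlaneList (f : (Fin m → F) → F) (d : ℕ) (θ : ℝ)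
    (p : (Fin m → F) × (Fin m → F) × (Fin m → F)) (q : MvPolynomial (Fin 2) F) : Prop :=
  q.totalDegree ≤ d ∧
    θ * (Fintype.card F : ℝ) ^ 2 ≤
      (((Finset.univ : Finset (F × F)).filter fun t =>
          MvPolynomial.eval ![t.1, t.2] q = f (planePoint p t)).card : ℝ)

open MvPolynomial

namespace MvPolynomial

theorem totalDegree_bind₁_le {σ τ R : Type*} [CommSemiring R] {g : σ → MvPolynomial τ R}
    (hg : ∀ i, (g i).totalDegree ≤ 1) (q : MvPolynomial σ R) :
    (bind₁ g q).totalDegree ≤ q.totalDegree := by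
  conv_lhs => rw [q.as_sum, map_sum]
  refine totalDegree_finsetSum_le fun μ hμ => ?_
  rw [bind₁_monomial]
  calc (C (coeff μ q) * ∏ i ∈ μ.support, g i ^ μ i).totalDegree
      ≤ ∑ i ∈ μ.support, (g i ^ μ i).totalDegree := by
        refine (totalDegree_mul _ _).trans ?_
        rw [totalDegree_C, zero_add]
        exact totalDegree_finsetProd _ _
    _ ≤ ∑ i ∈ μ.support, μ i := sum_le_sum fun i _ =>
        (totalDegree_pow _ _).trans (by simpa using Nat.mul_le_mul_left (μ i) (hg i))
    _ ≤ q.totalDegree := le_totalDegree hμ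

theorem finite_setOf_totalDegree_le (σ R : Type*) [Finite σ] [CommRing R] [Finite R] (d : ℕ) :
    {q : MvPolynomial σ R | q.totalDegree ≤ d}.Finite := by
  have := Module.finite_of_finite R (M := restrictTotalDegree σ R d)
  convert Set.toFinite (restrictTotalDegree σ R d : Set (MvPolynomial σ R))
  ext q
  exact (mem_restrictTotalDegree σ d q).symm

section Bivariate

variable {R : Type*} [CommRing R]

noncomputable def bivariateShear (c : R) : MvPolynomial (Fin 2) R →ₐ[R] MvPolynomial (Fin 2) R :=
  bind₁ ![X 0, X 1 + C c * X 0]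

theorem eval_bivariateShear (c : R) (v : Fin 2 → R) (q : MvPolynomial (Fin 2) R) :
    eval v (bivariateShear c q) = eval ![v 0, v 1 + c * v 0] q := by
  rw [bivariateShear, eval, eval₂Hom_bind₁]
  congr 2
  ext i; fin_cases i <;> simp

theorem bivariateShear_neg_bivariateShear (c : R) (q : MvPolynomial (Fin 2) R) :
    bivariateShear (-c) (bivariateShear c q) = q := by
  rw [bivariateShear, bivariateShear, bind₁_bind₁]
  conv_rhs => rw [← AlgHom.id_apply (R := R) q, ← bind₁_X_left]
  congr 2
  ext i; fin_cases i <;> simp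

theorem bivariateShear_injective (c : R) : Function.Injective (bivariateShear c) :=
  Function.LeftInverse.injective (bivariateShear_neg_bivariateShear c)

theorem totalDegree_bivariateShear_le (c : R) (q : MvPolynomial (Fin 2) R) :
    (bivariateShear c q).totalDegree ≤ q.totalDegree := by
  have hX (i : Fin 2) : (X i : MvPolynomial (Fin 2) R).totalDegree ≤ 1 :=
    (totalDegree_monomial_le _ _).trans (by simp)
  refine totalDegree_bind₁_le (fun i => ?_) q
  fin_cases i
  · exact hX 0
  · refine (totalDegree_add _ _).trans (max_le (hX 1) ?_)
    exact (totalDegree_mul _ _).trans (by simpa using hX 0)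

variable [IsDomain R] [Fintype R] [DecidableEq R]

theorem card_filter_eval_eq_zero_le {h : MvPolynomial (Fin 2) R} (h0 : h ≠ 0) :
    #{t : R × R | eval ![t.1, t.2] h = 0} ≤ h.totalDegree * Fintype.card R := by
  have hSZ := schwartz_zippel_totalDegree h0 (univ : Finset R)
  rw [Fintype.piFinset_univ, card_univ] at hSZ
  have hcard : #{t : R × R | eval ![t.1, t.2] h = 0} = #{v : Fin 2 → R | eval v h = 0} :=
    card_equiv (finTwoArrowEquiv R).symm fun t => by simp
  have hN : (0 : ℚ≥0) < Fintype.card R := by exact_mod_cast Fintype.card_pos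
  rw [← hcard, div_le_div_iff₀ (by positivity) hN] at hSZ
  have : (#{t : R × R | eval ![t.1, t.2] h = 0} : ℚ≥0) ≤ h.totalDegree * Fintype.card R :=
    le_of_mul_le_mul_right (hSZ.trans_eq (by ring)) hN
  exact_mod_cast this

theorem card_filter_forall_eval_line_eq_zero_le {h : MvPolynomial (Fin 2) R} (h0 : h ≠ 0)
    (hdeg : h.totalDegree < Fintype.card R) :
    #{c : R | ∀ t, eval ![t, c * t] h = 0} ≤ h.totalDegree := by
  set C : Finset R := {c | ∀ t, eval ![t, c * t] h = 0}
  obtain hC | ⟨c₀, hc₀⟩ := C.eq_empty_or_nonempty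
  · simp [hC]
  -- the lines of slopes `c ∈ C` carry `#C * (|R| - 1) + 1` zeros of `h`, while
  -- Schwartz–Zippel allows at most `h.totalDegree * |R|`
  set T := C ×ˢ (univ : Finset R).erase 0
  set lines := T.image fun ct => (ct.2, ct.1 * ct.2)
  have hinj : Set.InjOn (fun ct : R × R => (ct.2, ct.1 * ct.2)) T := by
    rintro ⟨c, t⟩ hct ⟨c', t'⟩ hct' heq
    simp only [T, coe_product, Set.mem_prod, mem_coe, mem_erase, Prod.mk.injEq] at hct heq
    obtain ⟨rfl, hmul⟩ := heq
    simp [mul_right_cancel₀ hct.2.1 hmul]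
  have horigin : ((0 : R), (0 : R)) ∉ lines := by simp [lines, T]
  have hsub : insert (0, 0) lines ⊆ ({t | eval ![t.1, t.2] h = 0} : Finset (R × R)) := by
    intro t ht
    simp only [mem_insert, lines, T, mem_image, mem_product, mem_erase, mem_filter, C] at ht ⊢
    refine ⟨mem_univ _, ?_⟩
    obtain rfl | ⟨⟨c, s⟩, ⟨hc, -⟩, rfl⟩ := ht
    · simpa using (mem_filter.1 hc₀).2 0
    · exact hc.2 s
  have hcard := (card_le_card hsub).trans (card_filter_eval_eq_zero_le h0)
  rw [card_insert_of_notMem horigin, card_image_of_injOn hinj, card_product,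
    card_erase_of_mem (mem_univ _), card_univ] at hcard
  obtain ⟨n, hn⟩ := Nat.exists_eq_add_of_lt (Fintype.card_pos (α := R))
  rw [hn] at hcard hdeg
  simp only [zero_add, add_tsub_cancel_right] at hcard hdeg
  by_contra! hlt
  nlinarith

end Bivariate

end MvPolynomial

namespace Finset

variable {α ι : Type*} [Fintype α] [DecidableEq α]

theorem sum_card_filter_mem_eq_sum_card (K : Finset ι) (A : ι → Finset α) :
    ∑ a, #{k ∈ K | a ∈ A k} = ∑ k ∈ K, #(A k) := by
  simpa [bipartiteAbove, bipartiteBelow] using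
    sum_card_bipartiteAbove_eq_sum_card_bipartiteBelow (s := univ) (t := K) (fun a k => a ∈ A k)

theorem sum_card_filter_mem_sq_eq_sum_card_inter (K : Finset ι) (A : ι → Finset α) :
    ∑ a, #{k ∈ K | a ∈ A k} ^ 2 = ∑ k ∈ K, ∑ k' ∈ K, #(A k ∩ A k') := by
  have := sum_card_bipartiteAbove_eq_sum_card_bipartiteBelow (s := univ) (t := K ×ˢ K)
    (fun a kk => a ∈ A kk.1 ∧ a ∈ A kk.2)
  have hprod : ∀ a, (K ×ˢ K).bipartiteAbove (fun a kk => a ∈ A kk.1 ∧ a ∈ A kk.2) a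
      = {k ∈ K | a ∈ A k} ×ˢ {k ∈ K | a ∈ A k} := fun a =>
    filter_product (fun k => a ∈ A k) (fun k => a ∈ A k)
  have hinter : ∀ kk : ι × ι, ({a | a ∈ A kk.1 ∧ a ∈ A kk.2} : Finset α) = A kk.1 ∩ A kk.2 :=
    fun _ => by ext; simp
  simp only [hprod, card_product, bipartiteBelow] at this
  rw [← sum_product']
  simpa [sq, hinter] using this

theorem sq_sum_card_le_card_mul_sum_sum_card_inter (K : Finset ι) (A : ι → Finset α) :
    (∑ k ∈ K, (#(A k) : ℝ)) ^ 2 ≤ Fintype.card α * ∑ k ∈ K, ∑ k' ∈ K, (#(A k ∩ A k') : ℝ) := by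
  have hcs := sq_sum_le_card_mul_sum_sq (s := univ) (f := fun a => (#{k ∈ K | a ∈ A k} : ℝ))
  have hsum := congrArg (Nat.cast (R := ℝ)) (sum_card_filter_mem_eq_sum_card K A)
  have hsq := congrArg (Nat.cast (R := ℝ)) (sum_card_filter_mem_sq_eq_sum_card_inter K A)
  push_cast at hsum hsq
  rwa [hsum, hsq, card_univ] at hcs

/-- A Johnson-type list-size bound. -/
theorem card_mul_le_two_of_card_inter_le [Nonempty α] {K : Finset ι} {A : ι → Finset α} {θ : ℝ}
    (hlarge : ∀ k ∈ K, θ * Fintype.card α ≤ #(A k))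
    (hinter : ∀ k ∈ K, ∀ k' ∈ K, k ≠ k' → (#(A k ∩ A k') : ℝ) ≤ θ ^ 2 * Fintype.card α / 2) :
    #K * θ ≤ 2 := by
  classical
  set N : ℝ := (Fintype.card α : ℝ)
  set S : ℝ := ∑ k ∈ K, (#(A k) : ℝ)
  have hN : 0 < N := by simp [N, Fintype.card_pos]
  have hS : #K * θ * N ≤ S :=
    calc #K * θ * N = ∑ _k ∈ K, θ * N := by rw [sum_const, nsmul_eq_mul]; ring
      _ ≤ S := sum_le_sum fun k hk => by linarith [hlarge k hk]
  have hrow : ∀ k ∈ K, ∑ k' ∈ K, (#(A k ∩ A k') : ℝ) ≤ #(A k) + #K * (θ ^ 2 * N / 2) := by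
    intro k hk
    rw [← add_sum_erase _ _ hk, inter_self]
    gcongr
    calc ∑ k' ∈ K.erase k, (#(A k ∩ A k') : ℝ) ≤ ∑ _k' ∈ K.erase k, θ ^ 2 * N / 2 :=
          sum_le_sum fun k' hk' =>
            hinter k hk k' (mem_of_mem_erase hk') (ne_of_mem_erase hk').symm
      _ ≤ #K * (θ ^ 2 * N / 2) := by
          rw [sum_const, nsmul_eq_mul]
          gcongr
          exact erase_subset k K
  have hCS : S ^ 2 ≤ N * (S + #K ^ 2 * (θ ^ 2 * N / 2)) :=
    calc S ^ 2 ≤ N * ∑ k ∈ K, ∑ k' ∈ K, (#(A k ∩ A k') : ℝ) :=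
          sq_sum_card_le_card_mul_sum_sum_card_inter K A
      _ ≤ N * ∑ k ∈ K, ((#(A k) : ℝ) + #K * (θ ^ 2 * N / 2)) := by
          gcongr with k hk; exact hrow k hk
      _ = N * (S + #K ^ 2 * (θ ^ 2 * N / 2)) := by
          rw [sum_add_distrib, sum_const, nsmul_eq_mul]; ring
  by_contra! h
  set v := #K * θ * N
  have hv : 2 * N < v := by simp only [v]; nlinarith
  -- `S ↦ S * (S - N)` is increasing for `S ≥ N`, so `hCS` persists with `S` replaced by `v`
  have hmono : v * (v - N) ≤ S * (S - N) :=
    mul_le_mul hS (by linarith) (by linarith) (by linarith)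
  have hv2 : v * (v - N) ≤ v ^ 2 / 2 := by
    have : N * (#K ^ 2 * (θ ^ 2 * N / 2)) = v ^ 2 / 2 := by simp only [v]; ring
    nlinarith
  nlinarith

theorem card_mul_card_filter_eq_sum_card_filter {X G : Type*} [Fintype G] {S : Finset X}
    (e : G → X ≃ X) (he : ∀ g x, e g x ∈ S ↔ x ∈ S) (P : X → Prop) [DecidablePred P] :
    Fintype.card G * #{x ∈ S | P x} = ∑ x ∈ S, #{g | P (e g x)} := by
  have hinv : ∀ g, #{x ∈ S | P (e g x)} = #{x ∈ S | P x} := fun g =>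
    card_equiv (e g) fun x => by simp [he]
  rw [← card_univ, ← smul_eq_mul, ← sum_const, ← sum_congr rfl fun g _ => hinv g]
  exact sum_card_bipartiteAbove_eq_sum_card_bipartiteBelow (fun g x => P (e g x))

end Finset

/-- Keeps the plane through `x` spanned by `y` and `z - x`, and turns its line `t₂ = a t₁` into
the line `t₂ = (c + a) t₁` (see `planePoint_tripleShear`). -/
def tripleShear {K V : Type*} [Ring K] [AddCommGroup V] [Module K V] (c : K) :
    V × V × V ≃ V × V × V where
  toFun p := (p.1, p.2.1 + c • (p.2.2 - p.1), p.2.2)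
  invFun p := (p.1, p.2.1 - c • (p.2.2 - p.1), p.2.2)
  left_inv p := by simp
  right_inv p := by simp

theorem linearIndependent_tripleShear_iff {K V : Type*} [Field K] [AddCommGroup V] [Module K V]
    (c : K) (p : V × V × V) :
    LinearIndependent K ![(tripleShear c p).2.1, (tripleShear c p).2.2 - (tripleShear c p).1] ↔
      LinearIndependent K ![p.2.1, p.2.2 - p.1] :=
  LinearIndependent.pair_add_smul_left_iff c

theorem planePoint_tripleShear {K : Type*} [Field K] {n : ℕ} (c : K)
    (p : (Fin n → K) × (Fin n → K) × (Fin n → K)) (t : K × K) :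
    planePoint (tripleShear c p) t = planePoint p (t.1, c * t.1 + t.2) := by
  ext i
  simp only [planePoint, tripleShear, Equiv.coe_fn_mk, Pi.add_apply, Pi.smul_apply,
    Pi.sub_apply, smul_eq_mul]
  ring

section PlaneList

variable {f : (Fin m → F) → F} {d : ℕ} {θ : ℝ} {p : (Fin m → F) × (Fin m → F) × (Fin m → F)}

theorem InPlaneList.totalDegree_sub_le {q q' : MvPolynomial (Fin 2) F}
    (hq : InPlaneList f d θ p q) (hq' : InPlaneList f d θ p q') : (q - q').totalDegree ≤ d :=
  (totalDegree_sub q q').trans (max_le hq.1 hq'.1)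

theorem InPlaneList.bivariateShear_neg {c : F} {q : MvPolynomial (Fin 2) F}
    (h : InPlaneList f d θ (tripleShear c p) q) : InPlaneList f d θ p (bivariateShear (-c) q) := by
  refine ⟨(totalDegree_bivariateShear_le _ _).trans h.1, h.2.trans_eq ?_⟩
  norm_cast
  refine card_equiv (Equiv.prodShear (Equiv.refl F) fun a => Equiv.addLeft (c * a)) fun t => ?_
  simp [eval_bivariateShear, planePoint_tripleShear]

variable (f d θ p) in
def IsCollisionSlope (c : F) : Prop :=
  ∃ q q' : MvPolynomial (Fin 2) F, InPlaneList f d θ p q ∧ InPlaneList f d θ p q' ∧ q ≠ q' ∧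
    ∀ t : F, eval ![t, c * t] q = eval ![t, c * t] q'

theorem isCollisionSlope_zero_iff :
    IsCollisionSlope f d θ p 0 ↔ ∃ q q' : MvPolynomial (Fin 2) F,
      InPlaneList f d θ p q ∧ InPlaneList f d θ p q' ∧ q ≠ q' ∧
        ∀ t : F, eval ![t, 0] q = eval ![t, 0] q' := by
  simp [IsCollisionSlope]

theorem IsCollisionSlope.of_tripleShear {c a : F}
    (h : IsCollisionSlope f d θ (tripleShear c p) a) : IsCollisionSlope f d θ p (c + a) := by
  obtain ⟨q, q', hq, hq', hne, hline⟩ := h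
  refine ⟨_, _, hq.bivariateShear_neg, hq'.bivariateShear_neg,
    (bivariateShear_injective (-c)).ne hne, fun t => ?_⟩
  simpa [eval_bivariateShear, add_mul] using hline t

variable (f d θ p) in
noncomputable def planeList : Finset (MvPolynomial (Fin 2) F) :=
  ((finite_setOf_totalDegree_le (Fin 2) F d).subset fun _ hq => hq.1 :
    {q | InPlaneList f d θ p q}.Finite).toFinset

theorem mem_planeList {q : MvPolynomial (Fin 2) F} :
    q ∈ planeList f d θ p ↔ InPlaneList f d θ p q :=
  Set.Finite.mem_toFinset _

variable (f p) in
theorem card_planeList_mul_le_two (hθd : 2 * d ≤ θ ^ 2 * Fintype.card F) :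
    #(planeList f d θ p) * θ ≤ 2 := by
  set A : MvPolynomial (Fin 2) F → Finset (F × F) :=
    fun q => {t | eval ![t.1, t.2] q = f (planePoint p t)}
  refine card_mul_le_two_of_card_inter_le (A := A) (fun q hq => ?_) (fun q hq q' hq' hne => ?_)
  · simpa [sq] using (mem_planeList.1 hq).2
  have hsub : A q ∩ A q' ⊆ ({t | eval ![t.1, t.2] (q - q') = 0} : Finset (F × F)) := by
    intro t ht
    simp only [A, mem_inter, mem_filter, mem_univ, true_and] at ht ⊢
    rw [map_sub, ht.1, ht.2, sub_self]
  have hcard := (card_le_card hsub).trans ((card_filter_eval_eq_zero_le (sub_ne_zero.2 hne)).trans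
    (Nat.mul_le_mul_right _ ((mem_planeList.1 hq).totalDegree_sub_le (mem_planeList.1 hq'))))
  calc _ ≤ ((d * Fintype.card F : ℕ) : ℝ) := by exact_mod_cast hcard
    _ ≤ θ ^ 2 * ↑(Fintype.card (F × F)) / 2 := by
        push_cast [Fintype.card_prod]
        nlinarith [(Nat.cast_nonneg (Fintype.card F) : (0 : ℝ) ≤ _)]

variable (f p) in
open scoped Classical in
theorem card_isCollisionSlope_le (hd : d < Fintype.card F) (hθ : 0 < θ)
    (hθd : 2 * d ≤ θ ^ 2 * Fintype.card F) :
    (#{c | IsCollisionSlope f d θ p c} : ℝ) ≤ 4 * d / θ ^ 2 := by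
  set L := planeList f d θ p
  have hsub : ({c | IsCollisionSlope f d θ p c} : Finset F) ⊆
      L.offDiag.biUnion fun qq => {c | ∀ t, eval ![t, c * t] (qq.1 - qq.2) = 0} := by
    intro c hc
    obtain ⟨q, q', hq, hq', hne, hline⟩ := (mem_filter.1 hc).2
    refine mem_biUnion.2
      ⟨(q, q'), mem_offDiag.2 ⟨mem_planeList.2 hq, mem_planeList.2 hq', hne⟩, ?_⟩
    simp [hline]
  have hslopes : ∀ qq ∈ L.offDiag, #{c | ∀ t, eval ![t, c * t] (qq.1 - qq.2) = 0} ≤ d := by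
    rintro ⟨q, q'⟩ hqq
    obtain ⟨hq, hq', hne⟩ := mem_offDiag.1 hqq
    have hdeg := (mem_planeList.1 hq).totalDegree_sub_le (mem_planeList.1 hq')
    exact (card_filter_forall_eval_line_eq_zero_le (sub_ne_zero.2 hne)
      (hdeg.trans_lt hd)).trans hdeg
  have hcard : #{c | IsCollisionSlope f d θ p c} ≤ #L ^ 2 * d :=
    calc _ ≤ #L.offDiag * d := (card_le_card hsub).trans (card_biUnion_le_card_mul _ _ _ hslopes)
      _ ≤ #L ^ 2 * d := by gcongr; rw [offDiag_card, sq]; exact Nat.sub_le _ _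
  have hL := card_planeList_mul_le_two f p hθd
  rw [le_div_iff₀ (by positivity)]
  calc (#{c | IsCollisionSlope f d θ p c} : ℝ) * θ ^ 2 ≤ ((#L ^ 2 * d : ℕ) : ℝ) * θ ^ 2 := by
        gcongr
    _ = (#L * θ) ^ 2 * d := by push_cast; ring
    _ ≤ 2 ^ 2 * d := by gcongr
    _ = 4 * d := by norm_num

variable (f) in
open scoped Classical in
theorem card_filter_isCollisionSlope_zero_le (hd : d < Fintype.card F) (hθ : 0 < θ)
    (hθd : 2 * d ≤ θ ^ 2 * Fintype.card F)
    {S : Finset ((Fin m → F) × (Fin m → F) × (Fin m → F))}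
    (hS : ∀ (c : F) p, tripleShear c p ∈ S ↔ p ∈ S) :
    (#{p ∈ S | IsCollisionSlope f d θ p 0} : ℝ) ≤ 4 * d / (θ ^ 2 * Fintype.card F) * #S := by
  have hN : (0 : ℝ) < Fintype.card F := by exact_mod_cast Fintype.card_pos
  have hcount :=
    card_mul_card_filter_eq_sum_card_filter tripleShear hS (IsCollisionSlope f d θ · 0)
  have hsum : (Fintype.card F : ℝ) * #{p ∈ S | IsCollisionSlope f d θ p 0}
      ≤ #S * (4 * d / θ ^ 2) :=
    calc (Fintype.card F : ℝ) * #{p ∈ S | IsCollisionSlope f d θ p 0}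
        = ∑ p ∈ S, (#{c | IsCollisionSlope f d θ (tripleShear c p) 0} : ℝ) := by
          exact_mod_cast hcount
      _ ≤ ∑ _p ∈ S, 4 * d / θ ^ 2 := sum_le_sum fun p _ => by
          refine le_trans ?_ (card_isCollisionSlope_le f p hd hθ hθd)
          exact_mod_cast card_le_card (monotone_filter_right _ fun c _ h => by
            simpa using h.of_tripleShear)
      _ = #S * (4 * d / θ ^ 2) := by rw [sum_const, nsmul_eq_mul]
  calc (#{p ∈ S | IsCollisionSlope f d θ p 0} : ℝ)
      = Fintype.card F * #{p ∈ S | IsCollisionSlope f d θ p 0} / Fintype.card F := by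
        field_simp
    _ ≤ #S * (4 * d / θ ^ 2) / Fintype.card F := by gcongr
    _ = 4 * d / (θ ^ 2 * Fintype.card F) * #S := by field_simp

end PlaneList

open scoped Classical in
theorem rm_plane_list_uniqueness_general (m d : ℕ) (hd : d < Fintype.card F)
    (f : (Fin m → F) → F)
    (ρ ε : ℝ) (hερ : ε < ρ)
    (hgap : 2 * Real.sqrt ((d : ℝ) / (Fintype.card F : ℝ)) ≤ ρ - ε) :
    ((((Finset.univ : Finset ((Fin m → F) × (Fin m → F) × (Fin m → F))).filter fun p =>
          LinearIndependent F ![p.2.1, p.2.2 - p.1]).filter fun p =>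
          ∃ q q' : MvPolynomial (Fin 2) F,
            InPlaneList f d (ρ - ε) p q ∧ InPlaneList f d (ρ - ε) p q' ∧ q ≠ q' ∧
            ∀ t : F,
              MvPolynomial.eval ![t, 0] q = MvPolynomial.eval ![t, 0] q').card : ℝ) /
      (((Finset.univ : Finset ((Fin m → F) × (Fin m → F) × (Fin m → F))).filter fun p =>
          LinearIndependent F ![p.2.1, p.2.2 - p.1]).card : ℝ) ≤
    4 * (d : ℝ) / ((ρ - ε) ^ 2 * (Fintype.card F : ℝ)) := by
  have hN : (0 : ℝ) < Fintype.card F := by exact_mod_cast Fintype.card_pos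
  have hθd : 4 * (d : ℝ) ≤ (ρ - ε) ^ 2 * Fintype.card F := by
    have := pow_le_pow_left₀ (by positivity) hgap 2
    rw [mul_pow, Real.sq_sqrt (by positivity), ← mul_div_assoc, div_le_iff₀ hN] at this
    linarith
  simp_rw [← isCollisionSlope_zero_iff]
  refine div_le_of_le_mul₀ (by positivity) (by positivity) ?_
  refine card_filter_isCollisionSlope_zero_le f hd (sub_pos.2 hερ) (by linarith) fun c p => ?_
  simpa using linearIndependent_tripleShear_iff c p

open scoped Classical in
/-- for a uniformly random triple `(x,y,z)` with `y` and `z-x` linearly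
independent, the probability that the list `L(x,y,z)` contains two distinct polynomials
agreeing on the line `t₂ = 0` is at most `4d/((ρ-ε)²·|F|)`. -/
theorem rm_plane_list_uniqueness (m d : ℕ) (hm : 3 ≤ m) (hd : d < Fintype.card F)
    (f : (Fin m → F) → F)
    (ρ ε : ℝ) (hε : 0 < ε) (hερ : ε < ρ)
    (hgap : 2 * Real.sqrt ((d : ℝ) / (Fintype.card F : ℝ)) ≤ ρ - ε) :
    ((((Finset.univ : Finset ((Fin m → F) × (Fin m → F) × (Fin m → F))).filter fun p =>
          LinearIndependent F ![p.2.1, p.2.2 - p.1]).filter fun p =>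
          ∃ q q' : MvPolynomial (Fin 2) F,
            InPlaneList f d (ρ - ε) p q ∧ InPlaneList f d (ρ - ε) p q' ∧ q ≠ q' ∧
            ∀ t : F,
              MvPolynomial.eval ![t, 0] q = MvPolynomial.eval ![t, 0] q').card : ℝ) /
      (((Finset.univ : Finset ((Fin m → F) × (Fin m → F) × (Fin m → F))).filter fun p =>
          LinearIndependent F ![p.2.1, p.2.2 - p.1]).card : ℝ) ≤
    4 * (d : ℝ) / ((ρ - ε) ^ 2 * (Fintype.card F : ℝ)) :=
  rm_plane_list_uniqueness_general m d hd f ρ ε hερ hgap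
end

section
/- Let I be a nonempty set (of inputs) and R a nonempty finite set (of randomness strings), and let Succ ⊆ I × R (a success relation). Let s and t be positive integers, let sk : I → {0,1}^s (a sketch map), let Ver ⊆ {0,1}^s × R (a verifier relation), and let 0 ≤ ε < 2^{−s/t}. Suppose: (i) for every x ∈ I and r ∈ R, if (sk(x), r) ∈ Ver then (x, r) ∈ Succ; and (ii) for every x ∈ I, the fraction of r ∈ R with (sk(x), r) ∉ Ver is at most ε. Then there exist r₁, …, r_t ∈ R such that for every x ∈ I there is some 1 ≤ i ≤ t with (x, r_i) ∈ Succ. -/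
/-!
An input `x` can fail on a run `r` only if `r` lies in the rejection set `B_σ` of its sketch
`σ = sk x`. So a tuple `(r₁, …, r_t)` fails on some input only if it lies in `B_σ ^ t` for one
of the at most `2 ^ s` sketches `σ`. Since `|B_σ| ≤ ε |R|`, the union bound covers at most
`2 ^ s ε ^ t |R| ^ t < |R| ^ t` tuples, so some tuple is good on every input.
-/

open Finset

theorem exists_forall_exists_notMem_of_sum_card_pow_lt {ι κ R : Type*} [Fintype κ]
    [DecidableEq κ] [Fintype R] [DecidableEq R] (S : Finset ι) (B : ι → Finset R)
    (h : ∑ σ ∈ S, #(B σ) ^ Fintype.card κ < Fintype.card R ^ Fintype.card κ) :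
    ∃ rs : κ → R, ∀ σ ∈ S, ∃ i, rs i ∉ B σ := by
  by_contra! hcover
  have hsub : (univ : Finset (κ → R)) ⊆
      S.biUnion fun σ => Fintype.piFinset fun _ => B σ := by
    intro rs _
    obtain ⟨σ, hσ, hmem⟩ := hcover rs
    exact mem_biUnion.mpr ⟨σ, hσ, Fintype.mem_piFinset.mpr hmem⟩
  have hle : Fintype.card R ^ Fintype.card κ ≤ ∑ σ ∈ S, #(B σ) ^ Fintype.card κ :=
    calc Fintype.card R ^ Fintype.card κ = #(univ : Finset (κ → R)) := by simp
      _ ≤ #(S.biUnion fun σ => Fintype.piFinset fun _ => B σ) := card_le_card hsub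
      _ ≤ ∑ σ ∈ S, #(Fintype.piFinset fun _ : κ => B σ) := card_biUnion_le
      _ = ∑ σ ∈ S, #(B σ) ^ Fintype.card κ := by simp
  exact hle.not_gt h

theorem sum_card_pow_lt_card_pow {ι R : Type*} [Fintype R] [Nonempty R] (S : Finset ι)
    (B : ι → Finset R) {ε : ℝ} (t : ℕ)
    (hB : ∀ σ ∈ S, (#(B σ) : ℝ) ≤ ε * Fintype.card R) (hS : #S * ε ^ t < 1) :
    ∑ σ ∈ S, #(B σ) ^ t < Fintype.card R ^ t := by
  suffices (∑ σ ∈ S, #(B σ) ^ t : ℝ) < (Fintype.card R : ℝ) ^ t by exact_mod_cast this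
  calc (∑ σ ∈ S, #(B σ) ^ t : ℝ)
      ≤ ∑ _σ ∈ S, (ε * Fintype.card R) ^ t :=
        sum_le_sum fun σ hσ => pow_le_pow_left₀ (Nat.cast_nonneg _) (hB σ hσ) t
    _ = (#S * ε ^ t) * (Fintype.card R : ℝ) ^ t := by
        rw [sum_const, nsmul_eq_mul, mul_pow, mul_assoc]
    _ < (Fintype.card R : ℝ) ^ t := mul_lt_of_lt_one_left (by positivity) hS

theorem pow_mul_pow_lt_one_of_lt_rpow_neg_div {a ε : ℝ} {s t : ℕ} (ha : 0 < a)
    (hε0 : 0 ≤ ε) (ht : t ≠ 0) (hε : ε < a ^ (-(s : ℝ) / t)) : a ^ s * ε ^ t < 1 := by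
  have hpow : (a ^ (-(s : ℝ) / t)) ^ t = (a ^ s)⁻¹ := by
    rw [← Real.rpow_natCast _ t, ← Real.rpow_mul ha.le,
      div_mul_cancel₀ _ (Nat.cast_ne_zero.mpr ht), Real.rpow_neg ha.le, Real.rpow_natCast]
  calc a ^ s * ε ^ t < a ^ s * (a ^ (-(s : ℝ) / t)) ^ t :=
        mul_lt_mul_of_pos_left (pow_lt_pow_left₀ hε hε0 ht) (by positivity)
    _ = 1 := by rw [hpow, mul_inv_cancel₀ (by positivity)]

open scoped Classical in
theorem derandomization_by_oblivious_verifier_general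
    (I : Type*) (R : Type*) [Fintype R] [Nonempty R]
    (Succ : I → R → Prop)
    (s t : ℕ) (ht : 0 < t)
    (sk : I → (Fin s → Bool))
    (Ver : (Fin s → Bool) → R → Prop)
    (ε : ℝ) (hε0 : 0 ≤ ε) (hε : ε < (2 : ℝ) ^ (-(s : ℝ) / (t : ℝ)))
    (hsound : ∀ (x : I) (r : R), Ver (sk x) r → Succ x r)
    (hreject : ∀ x : I,
      (((Finset.univ : Finset R).filter fun r => ¬ Ver (sk x) r).card : ℝ) /
        (Fintype.card R : ℝ) ≤ ε) :
    ∃ rs : Fin t → R, ∀ x : I, ∃ i, Succ x (rs i) := by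
  let S : Finset (Fin s → Bool) := univ.filter (· ∈ Set.range sk)
  let B (σ : Fin s → Bool) : Finset R := univ.filter fun r => ¬ Ver σ r
  have hB : ∀ σ ∈ S, (#(B σ) : ℝ) ≤ ε * Fintype.card R := by
    simp only [S, mem_filter, Set.mem_range]
    rintro _ ⟨-, x, rfl⟩
    exact (div_le_iff₀ (by exact_mod_cast Fintype.card_pos)).mp (hreject x)
  have hS : (#S : ℝ) * ε ^ t < 1 := by
    have hcard : (#S : ℝ) ≤ 2 ^ s := by exact_mod_cast (card_le_univ S).trans_eq (by simp)
    exact (mul_le_mul_of_nonneg_right hcard (by positivity)).trans_lt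
      (pow_mul_pow_lt_one_of_lt_rpow_neg_div two_pos hε0 ht.ne' hε)
  obtain ⟨rs, hrs⟩ := exists_forall_exists_notMem_of_sum_card_pow_lt (κ := Fin t) S B
    (by simpa using sum_card_pow_lt_card_pow S B t hB hS)
  refine ⟨rs, fun x => ?_⟩
  obtain ⟨i, hi⟩ := hrs (sk x) (by simp [S])
  exact ⟨i, hsound x (rs i) (by simpa [B] using hi)⟩

open scoped Classical in
/-- derandomization by verifying from a sketch. If a deterministic verifier
`Ver`, reading only an `s`-bit sketch `sk x` of the input `x`, certifies success of the
randomized computation (soundness (i)), and on every input rejects at most an `ε`-fraction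
of the randomness strings (ii), with `ε < 2^{-s/t}`, then there are `t` randomness strings
`r₁, …, r_t` such that every input succeeds on at least one of them. -/
theorem derandomization_by_oblivious_verifier
    (I : Type*) [Nonempty I] (R : Type*) [Fintype R] [Nonempty R]
    (Succ : I → R → Prop)
    (s t : ℕ) (hs : 0 < s) (ht : 0 < t)
    (sk : I → (Fin s → Bool))
    (Ver : (Fin s → Bool) → R → Prop)
    (ε : ℝ) (hε0 : 0 ≤ ε) (hε : ε < (2 : ℝ) ^ (-(s : ℝ) / (t : ℝ)))
    (hsound : ∀ (x : I) (r : R), Ver (sk x) r → Succ x r)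
    (hreject : ∀ x : I,
      (((Finset.univ : Finset R).filter fun r => ¬ Ver (sk x) r).card : ℝ) /
        (Fintype.card R : ℝ) ≤ ε) :
    ∃ rs : Fin t → R, ∀ x : I, ∃ i, Succ x (rs i) :=
  derandomization_by_oblivious_verifier_general I R Succ s t ht sk Ver ε hε0 hε hsound hreject
end
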